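/- arXiv:0909.0293 — 4 statements merged into one kernel-verified Lean document; each statement's English description precedes it below -/
import Mathlib

section
/- Define, for a Cartan scheme with root system, X an object, and a word (i_1,…,i_m) in I^m, the multiset Λ^X(i_1,…,i_m) = (β_k)_{k=1}^m where β_k = s_{i_1}^{r_{i_1}(X)} s_{i_2}^{r_{i_2}r_{i_1}(X)} ⋯ s_{i_{k-1}}^{r_{i_{k-1}}⋯r_{i_1}(X)}(α_{i_k}), and the set Λ_+^X(i_1,…,i_m) = {λ ∈ Δ^X_+ | #{k : 1 ≤ k ≤ m, λ = ±β_k} is odd}. Then, with Y = r_{i_1}(X): if α_{i_1} ∉ Λ_+^Y(i_2,…,i_m), then Λ_+^X(i_1,…,i_m) = s_{i_1}^Y(Λ_+^Y(i_2,…,i_m)) ∪ {α_{i_1}}; if α_{i_1} ∈ Λ_+^Y(i_2,…,i_m), then Λ_+^X(i_1,…,i_m) = s_{i_1}^Y(Λ_+^Y(i_2,…,i_m) \ {α_{i_1}}). -/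
/-- A Cartan scheme `C = C(I, X, (r_i), (C^X))`:  a finite nonempty index set `I`,
a set of objects `X`, involutive maps `r i : X → X` (axiom (C1)), and for each object
a generalized Cartan matrix `c x : I → I → ℤ` satisfying axiom (C2). -/
structure CartanScheme (I X : Type*) [Fintype I] [DecidableEq I] [Nonempty I] [Nonempty X] where
  r : I → X → X
  c : X → I → I → ℤ
  r_invol : ∀ i x, r i (r i x) = x
  c_diag : ∀ x i, c x i i = 2
  c_offdiag_nonpos : ∀ x i j, i ≠ j → c x i j ≤ 0
  c_zero_symm : ∀ x i j, c x i j = 0 → c x j i = 0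
  c2 : ∀ x i j, c (r i x) i j = c x i j

namespace CartanScheme

variable {I X : Type*} [Fintype I] [DecidableEq I] [Nonempty I] [Nonempty X]

/-- The standard basis vector `α_i` of `ℤ^I`. -/
def alpha (i : I) : I → ℤ := Pi.single i 1

/-- The reflection `s_i^X ∈ Aut(ℤ^I)`, determined by `s_i^X (α_j) = α_j - c_{ij}^X • α_i`. -/
def s (C : CartanScheme I X) (x : X) (i : I) : (I → ℤ) → (I → ℤ) :=
  fun v => v - (∑ j, C.c x i j * v j) • alpha i

/-- The source object of the morphism `id_x s_{i_1} ⋯ s_{i_m}` of the Weyl groupoid,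
represented by the word `[i_1, …, i_m]` with target `x`;  it equals
`r_{i_m} ⋯ r_{i_1}(x)`. -/
def src (C : CartanScheme I X) : X → List I → X
  | x, [] => x
  | x, i :: t => C.src (C.r i x) t

/-- The action on `ℤ^I` of the morphism `id_x s_{i_1} ⋯ s_{i_m}` of the Weyl groupoid,
namely `s_{i_1}^{r_{i_1}(x)} ∘ s_{i_2}^{r_{i_2} r_{i_1}(x)} ∘ ⋯`. -/
def wmap (C : CartanScheme I X) : X → List I → (I → ℤ) → (I → ℤ)
  | _, [] => id
  | x, i :: t => (C.s (C.r i x) i) ∘ (C.wmap (C.r i x) t)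

/-- The list of roots `β_k = s_{i_1}^{r_{i_1}(x)} ⋯ s_{i_{k-1}}^{r_{i_{k-1}} ⋯ r_{i_1}(x)} (α_{i_k})`,
`k = 1, …, m`, associated with the word `(i_1, …, i_m)` and the object `x`. -/
def betas (C : CartanScheme I X) : X → List I → List (I → ℤ)
  | _, [] => []
  | x, i :: t => alpha i :: ((C.betas (C.r i x) t).map (C.s (C.r i x) i))

/-- The length `ℓ` of the morphism of the Weyl groupoid represented by the word `w`
(with target `x`):  the minimal length of a word representing the same morphism. -/
noncomputable def len (C : CartanScheme I X) (x : X) (w : List I) : ℕ :=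
  sInf {m | ∃ w' : List I, w'.length = m ∧
    C.src x w' = C.src x w ∧ C.wmap x w' = C.wmap x w}

end CartanScheme

/-- A root system `R` of type a Cartan scheme `C`:  subsets `Δ x ⊆ ℤ^I` satisfying
the axioms (R1)–(R4). -/
structure RootSystemOf {I X : Type*} [Fintype I] [DecidableEq I] [Nonempty I] [Nonempty X]
    (C : CartanScheme I X) where
  Δ : X → Set (I → ℤ)
  R1 : ∀ x v, v ∈ Δ x → 0 ≤ v ∨ 0 ≤ -v
  R1' : ∀ x v, v ∈ Δ x → -v ∈ Δ x
  R2_mem : ∀ x i, CartanScheme.alpha i ∈ Δ x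
  R2 : ∀ x i v, v ∈ Δ x → (∃ n : ℤ, v = n • CartanScheme.alpha i) →
    v = CartanScheme.alpha i ∨ v = - CartanScheme.alpha i
  R3 : ∀ x i, (C.s x i) '' (Δ x) = Δ (C.r i x)
  R4 : ∀ x i j, i ≠ j →
    ∀ _ : {v ∈ Δ x | ∃ a b : ℕ, v = (a : ℤ) • CartanScheme.alpha i +
        (b : ℤ) • CartanScheme.alpha j}.Finite,
      (fun y => C.r i (C.r j y))^[{v ∈ Δ x | ∃ a b : ℕ,
        v = (a : ℤ) • CartanScheme.alpha i + (b : ℤ) • CartanScheme.alpha j}.ncard] x = x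

namespace RootSystemOf

open CartanScheme

variable {I X : Type*} [Fintype I] [DecidableEq I] [Nonempty I] [Nonempty X]
variable {C : CartanScheme I X}

/-- The set of positive roots `Δ^x_+` at the object `x`. -/
def pos (R : RootSystemOf C) (x : X) : Set (I → ℤ) := {v ∈ R.Δ x | 0 ≤ v}

open Classical in
/-- The number of indices `k` with `λ = ± β_k` in a list of roots. -/
noncomputable def countSigned (lam : I → ℤ) : List (I → ℤ) → ℕ
  | [] => 0
  | b :: t => (if b = lam ∨ b = -lam then 1 else 0) + countSigned lam t

/-- The set `Λ_+^x(i_1, …, i_m)` of positive roots `λ` such that the number of `k`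
with `λ = ± β_k` is odd. -/
noncomputable def LambdaPlus (R : RootSystemOf C) (x : X) (w : List I) : Set (I → ℤ) :=
  {lam | lam ∈ R.Δ x ∧ 0 ≤ lam ∧ Odd (countSigned lam (C.betas x w))}

/-- The right Duflo order on morphisms of the Weyl groupoid with target `x`
(morphisms being represented by words):  `w₁ ≤_D w₂` iff `w₂ = w₁ u` for some
morphism `u` with `ℓ(w₂) = ℓ(w₁) + ℓ(u)`. -/
def DufloLE (R : RootSystemOf C) (x : X) (w₁ w₂ : List I) : Prop :=
  ∃ u : List I, C.src (C.src x w₁) u = C.src x w₂ ∧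
    C.wmap x w₂ = C.wmap x w₁ ∘ C.wmap (C.src x w₁) u ∧
    C.len x w₂ = C.len x w₁ + C.len (C.src x w₁) u

end RootSystemOf

open CartanScheme RootSystemOf

section Helpers

variable {I X : Type*} [Fintype I] [DecidableEq I] [Nonempty I] [Nonempty X]

lemma sum_c_alpha (C : CartanScheme I X) (x : X) (i : I) :
    (∑ j, C.c x i j * alpha i j) = 2 := by
  simp [alpha, Pi.single_apply, mul_ite, C.c_diag]

lemma s_apply (C : CartanScheme I X) (x : X) (i : I) (v : I → ℤ) :
    C.s x i v = v - (∑ j, C.c x i j * v j) • alpha i := rfl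

lemma s_alpha (C : CartanScheme I X) (x : X) (i : I) :
    C.s x i (alpha i) = - alpha i := by
  funext j
  simp only [s_apply, sum_c_alpha, Pi.sub_apply, Pi.smul_apply, Pi.neg_apply, smul_eq_mul]
  ring

lemma sum_c_s (C : CartanScheme I X) (x : X) (i : I) (v : I → ℤ) :
    (∑ j, C.c x i j * (C.s x i v) j) = -(∑ j, C.c x i j * v j) := by
  have h : ∀ j, C.c x i j * (C.s x i v) j
      = C.c x i j * v j - (∑ k, C.c x i k * v k) * (C.c x i j * alpha i j) := by
    intro j
    simp only [s_apply, Pi.sub_apply, Pi.smul_apply, smul_eq_mul]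
    ring
  simp only [h]
  rw [Finset.sum_sub_distrib, ← Finset.mul_sum, sum_c_alpha]
  ring

lemma s_s (C : CartanScheme I X) (x : X) (i : I) (v : I → ℤ) :
    C.s x i (C.s x i v) = v := by
  funext j
  simp only [s_apply C x i (C.s x i v), sum_c_s]
  simp only [s_apply, Pi.sub_apply, Pi.smul_apply, smul_eq_mul]
  ring

lemma s_neg (C : CartanScheme I X) (x : X) (i : I) (v : I → ℤ) :
    C.s x i (-v) = -(C.s x i v) := by
  funext j
  simp only [s_apply, Pi.neg_apply, Pi.sub_apply, Pi.smul_apply, smul_eq_mul,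
    Finset.sum_neg_distrib, mul_neg]
  ring

lemma s_r_eq (C : CartanScheme I X) (x : X) (i : I) :
    C.s (C.r i x) i = C.s x i := by
  funext v
  simp only [CartanScheme.s, C.c2]

lemma countSigned_nil (lam : I → ℤ) : countSigned lam ([] : List (I → ℤ)) = 0 := rfl

open Classical in
lemma countSigned_cons (lam b : I → ℤ) (l : List (I → ℤ)) :
    countSigned lam (b :: l) = (if b = lam ∨ b = -lam then 1 else 0) + countSigned lam l := by
  simp [countSigned]

lemma countSigned_neg (lam : I → ℤ) (l : List (I → ℤ)) :
    countSigned (-lam) l = countSigned lam l := by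
  induction l with
  | nil => rfl
  | cons b tl ih =>
    rw [countSigned_cons, countSigned_cons, ih, neg_neg]
    congr 1
    simp only [or_comm]

lemma countSigned_map (C : CartanScheme I X) (x : X) (i : I) (lam : I → ℤ)
    (l : List (I → ℤ)) :
    countSigned lam (l.map (C.s x i)) = countSigned (C.s x i lam) l := by
  induction l with
  | nil => rfl
  | cons b tl ih =>
    rw [List.map_cons, countSigned_cons, countSigned_cons, ih]
    congr 1
    have hiff : (C.s x i b = lam ∨ C.s x i b = -lam)
        ↔ (b = C.s x i lam ∨ b = -(C.s x i lam)) := by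
      constructor
      · rintro (h | h)
        · left; rw [← h, s_s]
        · right; rw [← s_neg, ← h, s_s]
      · rintro (h | h)
        · left; rw [h, s_s]
        · right; rw [h, s_neg, s_s]
    simp only [hiff]

lemma alpha_nonneg (i : I) : (0 : I → ℤ) ≤ alpha i := by
  intro j
  simp only [alpha, Pi.zero_apply, Pi.single_apply]
  split <;> omega

lemma neg_alpha_not_nonneg (i : I) : ¬ (0 : I → ℤ) ≤ -alpha i := by
  intro h
  have := h i
  simp [alpha, Pi.single_apply] at this

lemma s_pos (C : CartanScheme I X) (R : RootSystemOf C) (x : X) (i : I) (v : I → ℤ)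
    (hv : v ∈ R.Δ x) (hv0 : 0 ≤ v) (hvi : v ≠ alpha i) :
    0 ≤ C.s x i v := by
  have hsv : C.s x i v ∈ R.Δ (C.r i x) := by
    rw [← R.R3]; exact ⟨v, hv, rfl⟩
  rcases R.R1 _ _ hsv with h | h
  · exact h
  exfalso
  have hji : ∀ j, j ≠ i → v j = 0 := by
    intro j hj
    have h1 : (C.s x i v) j = v j := by
      simp [s_apply, alpha, Pi.single_apply, hj]
    have h2 := h j
    have h3 := hv0 j
    simp only [Pi.zero_apply, Pi.neg_apply, h1] at h2 h3
    omega
  have hv' : v = (v i) • alpha i := by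
    funext j
    by_cases hj : j = i
    · subst hj; simp [alpha, Pi.single_apply]
    · simp [alpha, Pi.single_apply, hj, hji j hj]
  rcases R.R2 x i v hv ⟨v i, hv'⟩ with h' | h'
  · exact hvi h'
  · have h4 := hv0 i
    rw [h'] at h4
    simp [alpha, Pi.single_apply] at h4

end Helpers


/-- (Lemma on `Λ_+`.)  Let `x` be an object, `i ∈ I`, `t` a word, and
`y = r_i(x)`.  If `α_i ∉ Λ_+^y(t)` then `Λ_+^x(i :: t) = s_i^y (Λ_+^y(t)) ∪ {α_i}`;
if `α_i ∈ Λ_+^y(t)` then `Λ_+^x(i :: t) = s_i^y (Λ_+^y(t) \ {α_i})`. -/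
theorem lambdaPlus_cons
    {I X : Type*} [Fintype I] [DecidableEq I] [Nonempty I] [Nonempty X]
    (C : CartanScheme I X) (R : RootSystemOf C) (x : X) (i : I) (t : List I) :
    (alpha i ∉ R.LambdaPlus (C.r i x) t →
      R.LambdaPlus x (i :: t) =
        (C.s (C.r i x) i) '' (R.LambdaPlus (C.r i x) t) ∪ {alpha i}) ∧
    (alpha i ∈ R.LambdaPlus (C.r i x) t →
      R.LambdaPlus x (i :: t) =
        (C.s (C.r i x) i) '' (R.LambdaPlus (C.r i x) t \ {alpha i})) := by
  set y := C.r i x with hy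
  have hse : C.s y i = C.s x i := s_r_eq C x i
  have hαΔy : alpha i ∈ R.Δ y := R.R2_mem y i
  have hαpos : (0 : I → ℤ) ≤ alpha i := alpha_nonneg i
  have hnegα : ¬ (0 : I → ℤ) ≤ -alpha i := neg_alpha_not_nonneg i
  have hΔyx : ∀ μ ∈ R.Δ y, C.s y i μ ∈ R.Δ x := by
    intro μ hμ
    have h3 := R.R3 y i
    rw [show C.r i y = x from C.r_invol i x] at h3
    rw [← h3]; exact ⟨μ, hμ, rfl⟩
  have hΔxy : ∀ v ∈ R.Δ x, C.s y i v ∈ R.Δ y := by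
    intro v hv
    rw [hse, ← R.R3 x i]; exact ⟨v, hv, rfl⟩
  -- membership characterization of the left-hand side
  have hmem : ∀ lam, lam ∈ R.LambdaPlus x (i :: t) ↔
      lam ∈ R.Δ x ∧ 0 ≤ lam ∧
      Odd ((if alpha i = lam ∨ alpha i = -lam then 1 else 0)
        + countSigned (C.s y i lam) (C.betas y t)) := by
    intro lam
    show (lam ∈ R.Δ x ∧ 0 ≤ lam ∧ Odd (countSigned lam (C.betas x (i :: t)))) ↔ _
    rw [show C.betas x (i :: t) = alpha i :: ((C.betas y t).map (C.s y i)) from rfl,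
      countSigned_cons, countSigned_map]
  -- indicator vanishes for positive roots different from α_i
  have hind0 : ∀ lam : I → ℤ, 0 ≤ lam → lam ≠ alpha i →
      ¬ (alpha i = lam ∨ alpha i = -lam) := by
    rintro lam h0 hne (h | h)
    · exact hne h.symm
    · have hl : lam = -alpha i := by rw [← neg_neg lam, ← h]
      rw [hl] at h0; exact hnegα h0
  -- α_i characterizations
  have hαA : alpha i ∈ R.LambdaPlus y t ↔ Odd (countSigned (alpha i) (C.betas y t)) := by
    constructor
    · rintro ⟨_, _, h⟩; exact h
    · intro h; exact ⟨hαΔy, hαpos, h⟩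
  have hαLHS : alpha i ∈ R.LambdaPlus x (i :: t) ↔
      ¬ Odd (countSigned (alpha i) (C.betas y t)) := by
    rw [hmem]
    have hαΔx : alpha i ∈ R.Δ x := R.R2_mem x i
    have hsα : C.s y i (alpha i) = -alpha i := s_alpha C y i
    rw [if_pos (Or.inl rfl), hsα, countSigned_neg, add_comm, Nat.odd_add_one]
    simp [hαΔx, hαpos]
  -- core equivalence for λ ≠ α_i
  have hcore : ∀ lam : I → ℤ, lam ≠ alpha i →
      (lam ∈ R.LambdaPlus x (i :: t) ↔
        C.s y i lam ∈ R.LambdaPlus y t ∧ lam ∈ R.Δ x ∧ 0 ≤ lam) := by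
    intro lam hne
    rw [hmem]
    constructor
    · rintro ⟨h1, h2, h3⟩
      rw [if_neg (hind0 lam h2 hne), zero_add] at h3
      have h0s : 0 ≤ C.s y i lam := by
        rw [hse]; exact s_pos C R x i lam h1 h2 hne
      exact ⟨⟨hΔxy lam h1, h0s, h3⟩, h1, h2⟩
    · rintro ⟨⟨hμ1, hμ2, hμ3⟩, h1, h2⟩
      refine ⟨h1, h2, ?_⟩
      rw [if_neg (hind0 lam h2 hne), zero_add]
      exact hμ3
  -- from μ ∈ Λ_+^y(t), μ ≠ α_i, conclude s μ ∈ LHS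
  have himg : ∀ μ : I → ℤ, μ ∈ R.LambdaPlus y t → μ ≠ alpha i →
      C.s y i μ ∈ R.LambdaPlus x (i :: t) := by
    rintro μ ⟨hμ1, hμ2, hμ3⟩ hμne
    have hsne : C.s y i μ ≠ alpha i := by
      intro h
      have : μ = C.s y i (alpha i) := by rw [← h, s_s]
      rw [s_alpha C y i] at this
      rw [this] at hμ2; exact hnegα hμ2
    rw [hcore _ hsne, s_s]
    exact ⟨⟨hμ1, hμ2, hμ3⟩, hΔyx μ hμ1, s_pos C R y i μ hμ1 hμ2 hμne⟩
  constructor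
  · -- case α_i ∉ Λ_+^y(t)
    intro hα
    ext lam
    constructor
    · intro hl
      by_cases hne : lam = alpha i
      · exact Or.inr (by simp [hne])
      · left
        refine ⟨C.s y i lam, ?_, s_s C y i lam⟩
        exact ((hcore lam hne).mp hl).1
    · rintro (⟨μ, hμ, rfl⟩ | hl)
      · refine himg μ hμ ?_
        intro h; rw [h] at hμ; exact hα hμ
      · have : lam = alpha i := hl
        rw [this, hαLHS]
        intro hodd
        exact hα (hαA.mpr hodd)
  · -- case α_i ∈ Λ_+^y(t)
    intro hα
    ext lam
    constructor
    · intro hl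
      by_cases hne : lam = alpha i
      · exfalso
        rw [hne, hαLHS] at hl
        exact hl (hαA.mp hα)
      · refine ⟨C.s y i lam, ⟨((hcore lam hne).mp hl).1, ?_⟩, s_s C y i lam⟩
        intro h
        have hmem' : C.s y i lam = alpha i := h
        have : lam = C.s y i (alpha i) := by rw [← hmem', s_s]
        rw [s_alpha C y i] at this
        have h2 := ((hcore lam hne).mp hl).2.2
        rw [this] at h2; exact hnegα h2
    · rintro ⟨μ, ⟨hμ, hμne⟩, rfl⟩
      exact himg μ hμ (by simpa using hμne)
end

section
/- The right Duflo order ≤_D on the set of morphisms of the Weyl groupoid of a root system with a fixed target X is a partial order: it is reflexive, antisymmetric and transitive. -/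
open CartanScheme RootSystemOf

namespace CartanScheme

variable {I X : Type*} [Fintype I] [DecidableEq I] [Nonempty I] [Nonempty X]
variable (C : CartanScheme I X)

lemma src_append (x : X) (a b : List I) :
    C.src x (a ++ b) = C.src (C.src x a) b := by
  induction a generalizing x with
  | nil => rfl
  | cons i t ih => simp [src, ih]

lemma wmap_append (x : X) (a b : List I) :
    C.wmap x (a ++ b) = C.wmap x a ∘ C.wmap (C.src x a) b := by
  induction a generalizing x with
  | nil => rfl
  | cons i t ih => simp [wmap, src, ih, Function.comp_assoc]

lemma len_set_nonempty (x : X) (w : List I) :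
    {m | ∃ w' : List I, w'.length = m ∧
      C.src x w' = C.src x w ∧ C.wmap x w' = C.wmap x w}.Nonempty :=
  ⟨w.length, w, rfl, rfl, rfl⟩

lemma len_mem (x : X) (w : List I) :
    ∃ w' : List I, w'.length = C.len x w ∧
      C.src x w' = C.src x w ∧ C.wmap x w' = C.wmap x w :=
  Nat.sInf_mem (C.len_set_nonempty x w)

lemma len_le (x : X) (w w' : List I) (h1 : C.src x w' = C.src x w)
    (h2 : C.wmap x w' = C.wmap x w) : C.len x w ≤ w'.length :=
  Nat.sInf_le ⟨w', rfl, h1, h2⟩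

lemma len_congr (x : X) (a b : List I) (h1 : C.src x a = C.src x b)
    (h2 : C.wmap x a = C.wmap x b) : C.len x a = C.len x b := by
  unfold len
  rw [h1, h2]

lemma len_nil (x : X) : C.len x ([] : List I) = 0 :=
  Nat.le_zero.mp (C.len_le x [] [] rfl rfl)

lemma len_append_le (x : X) (a b : List I) :
    C.len x (a ++ b) ≤ C.len x a + C.len (C.src x a) b := by
  obtain ⟨a', ha, hsa, hwa⟩ := C.len_mem x a
  obtain ⟨b', hb, hsb, hwb⟩ := C.len_mem (C.src x a) b
  have h1 : C.src x (a' ++ b') = C.src x (a ++ b) := by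
    rw [src_append, src_append, hsa, hsb]
  have h2 : C.wmap x (a' ++ b') = C.wmap x (a ++ b) := by
    rw [wmap_append, wmap_append, hsa, hwa, hwb]
  calc C.len x (a ++ b) ≤ (a' ++ b').length := C.len_le x _ _ h1 h2
    _ = C.len x a + C.len (C.src x a) b := by simp [ha, hb]

end CartanScheme

/-- The right Duflo order `≤_D` on the set of morphisms of the Weyl
groupoid of a root system with fixed target `x` is a partial order:  it is reflexive,
antisymmetric (with respect to equality of morphisms, i.e. equality of source and of the
action on `ℤ^I`) and transitive. -/
theorem dufloLE_partialOrder
    {I X : Type*} [Fintype I] [DecidableEq I] [Nonempty I] [Nonempty X]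
    (C : CartanScheme I X) (R : RootSystemOf C) (x : X) :
    (∀ w : List I, R.DufloLE x w w) ∧
    (∀ w₁ w₂ : List I, R.DufloLE x w₁ w₂ → R.DufloLE x w₂ w₁ →
      C.src x w₁ = C.src x w₂ ∧ C.wmap x w₁ = C.wmap x w₂) ∧
    (∀ w₁ w₂ w₃ : List I, R.DufloLE x w₁ w₂ → R.DufloLE x w₂ w₃ → R.DufloLE x w₁ w₃) := by
  refine ⟨?_, ?_, ?_⟩
  · intro w
    exact ⟨[], rfl, rfl, by rw [C.len_nil, Nat.add_zero]⟩
  · rintro w₁ w₂ ⟨u, hsu, hwu, hlu⟩ ⟨v, hsv, hwv, hlv⟩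
    have hz : C.len (C.src x w₁) u = 0 := by omega
    obtain ⟨u', hu'len, hu's, hu'w⟩ := C.len_mem (C.src x w₁) u
    rw [hz, List.length_eq_zero_iff] at hu'len
    subst hu'len
    constructor
    · rw [← hsu, ← hu's]; rfl
    · rw [hwu, ← hu'w]; rfl
  · rintro w₁ w₂ w₃ ⟨u, hsu, hwu, hlu⟩ ⟨v, hsv, hwv, hlv⟩
    refine ⟨u ++ v, ?_, ?_, ?_⟩
    · rw [C.src_append, hsu, hsv]
    · rw [hwv, hwu, C.wmap_append, hsu, Function.comp_assoc]
    · have h3 : C.src x w₃ = C.src x (w₁ ++ (u ++ v)) := by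
        rw [C.src_append, C.src_append, hsu, ← hsv]
      have h4 : C.wmap x w₃ = C.wmap x (w₁ ++ (u ++ v)) := by
        rw [C.wmap_append, C.wmap_append, hsu, hwv, hwu, Function.comp_assoc]
      have hle1 : C.len x w₃ ≤ C.len x w₁ + C.len (C.src x w₁) (u ++ v) := by
        calc C.len x w₃ = C.len x (w₁ ++ (u ++ v)) := C.len_congr x _ _ h3 h4
          _ ≤ _ := C.len_append_le x _ _
      have hle2 : C.len (C.src x w₁) (u ++ v) ≤
          C.len (C.src x w₁) u + C.len (C.src (C.src x w₁) u) v := C.len_append_le _ _ _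
      rw [hsu] at hle2
      omega
end

section
/- Let H be a Hopf algebra with bijective antipode, R a Hopf algebra in the Yetter–Drinfeld category over H, B ⊆ R a Hopf subalgebra in the category, and π : R → B a morphism of braided Hopf algebras with π|_B = id_B. Let R^{co B} = {r ∈ R : r^{(1)} ⊗ π(r^{(2)}) = r ⊗ 1}. If E ⊆ R is a right coideal subalgebra in the Yetter–Drinfeld category with B ⊆ E, then the multiplication map (R^{co B} ∩ E) ⊗ B → E is a linear isomorphism. -/
open TensorProduct

noncomputable section

variable (k : Type*) [Field k]
variable (H : Type*) [Ring H] [HopfAlgebra k H]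
variable (R : Type*) [Ring R] [Algebra k R]

/-- A bialgebra in the category `𝔜𝔇 = {}^H_H 𝒴𝒟` of Yetter–Drinfeld modules over `H`:
an `H`-module and `H`-comodule algebra `R` together with a comultiplication, counit and
the braiding coming from the Yetter–Drinfeld structure, subject to the axioms of a
bialgebra in a braided category. -/
structure YDBialgebra where
  /-- the `H`-action on `R` -/
  act : H →ₗ[k] R →ₗ[k] R
  /-- the `H`-coaction on `R` -/
  coact : R →ₗ[k] H ⊗[k] R
  /-- the comultiplication of `R` -/
  comul : R →ₗ[k] R ⊗[k] R
  /-- the counit of `R` -/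
  counit : R →ₗ[k] k
  /-- the braiding `c(x ⊗ y) = x_{(-1)} · y ⊗ x_{(0)}` of the Yetter–Drinfeld category -/
  braid : R ⊗[k] R →ₗ[k] R ⊗[k] R
  act_one : ∀ x : R, act 1 x = x
  act_mul : ∀ (g h : H) (x : R), act (g * h) x = act g (act h x)
  act_unit : ∀ h : H, act h 1 = (Coalgebra.counit (R := k) (A := H) h) • (1 : R)
  act_mul_compat :
    TensorProduct.lift act ∘ₗ LinearMap.lTensor H (LinearMap.mul' k R) =
      LinearMap.mul' k R ∘ₗ
        TensorProduct.map (TensorProduct.lift act) (TensorProduct.lift act) ∘ₗ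
        (TensorProduct.tensorTensorTensorComm k H H R R).toLinearMap ∘ₗ
        LinearMap.rTensor (R ⊗[k] R) (Coalgebra.comul (R := k) (A := H))
  coact_counit : ∀ x : R,
    (TensorProduct.lid k R)
      ((LinearMap.rTensor R (Coalgebra.counit (R := k) (A := H))) (coact x)) = x
  coact_coassoc : ∀ x : R,
    (TensorProduct.assoc k H H R)
      ((LinearMap.rTensor R (Coalgebra.comul (R := k) (A := H))) (coact x)) =
      (LinearMap.lTensor H coact) (coact x)
  coact_one : coact 1 = 1 ⊗ₜ[k] 1
  braid_apply : ∀ x y : R,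
    braid (x ⊗ₜ[k] y) = (LinearMap.rTensor R (act.flip y)) (coact x)
  comul_coassoc : ∀ x : R,
    (TensorProduct.assoc k R R R) ((LinearMap.rTensor R comul) (comul x)) =
      (LinearMap.lTensor R comul) (comul x)
  comul_counit_left : ∀ x : R,
    (TensorProduct.lid k R) ((LinearMap.rTensor R counit) (comul x)) = x
  comul_counit_right : ∀ x : R,
    (TensorProduct.rid k R) ((LinearMap.lTensor R counit) (comul x)) = x
  comul_one : comul 1 = 1 ⊗ₜ[k] 1
  counit_one : counit 1 = 1
  counit_mul : ∀ x y : R, counit (x * y) = counit x * counit y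
  /-- braided multiplicativity of the comultiplication:
  `Δ ∘ m = (m ⊗ m) ∘ (id ⊗ c ⊗ id) ∘ (Δ ⊗ Δ)` -/
  comul_mul : ∀ x y : R,
    comul (x * y) =
      (TensorProduct.map (LinearMap.mul' k R) (LinearMap.mul' k R))
        (((TensorProduct.assoc k R R (R ⊗[k] R)).symm.toLinearMap ∘ₗ
          LinearMap.lTensor R ((TensorProduct.assoc k R R R).toLinearMap) ∘ₗ
          LinearMap.lTensor R (LinearMap.rTensor R braid) ∘ₗ
          LinearMap.lTensor R ((TensorProduct.assoc k R R R).symm.toLinearMap) ∘ₗ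
          (TensorProduct.assoc k R R (R ⊗[k] R)).toLinearMap)
          (comul x ⊗ₜ[k] comul y))

/-- A Hopf algebra in the Yetter–Drinfeld category over `H`:  a bialgebra in the
category together with an antipode, which is a morphism in the category. -/
structure YDHopfAlgebra extends YDBialgebra k H R where
  /-- the antipode of `R` -/
  S : R →ₗ[k] R
  S_mul_left : ∀ x : R,
    (LinearMap.mul' k R) ((LinearMap.rTensor R S) (comul x)) = counit x • (1 : R)
  S_mul_right : ∀ x : R,
    (LinearMap.mul' k R) ((LinearMap.lTensor R S) (comul x)) = counit x • (1 : R)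
  S_equivariant : ∀ (h : H) (x : R), S (act h x) = act h (S x)
  S_coequivariant : ∀ x : R, coact (S x) = (LinearMap.lTensor H S) (coact x)

variable {k H R}

/-- The multiplication of the bosonization (Radford biproduct) `R # H`:
`(r # h)(r' # h') = r (h_{(1)} · r') # h_{(2)} h'`. -/
def smashMul (A : YDBialgebra k H R) : (R ⊗[k] H) ⊗[k] (R ⊗[k] H) →ₗ[k] R ⊗[k] H :=
  TensorProduct.map (LinearMap.mul' k R) (LinearMap.mul' k H) ∘ₗ
    (TensorProduct.assoc k R R (H ⊗[k] H)).symm.toLinearMap ∘ₗ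
    LinearMap.lTensor R (LinearMap.rTensor (H ⊗[k] H) (TensorProduct.lift A.act)) ∘ₗ
    LinearMap.lTensor R (TensorProduct.tensorTensorTensorComm k H H R H).toLinearMap ∘ₗ
    (TensorProduct.assoc k R (H ⊗[k] H) (R ⊗[k] H)).toLinearMap ∘ₗ
    LinearMap.rTensor (R ⊗[k] H) (LinearMap.lTensor R (Coalgebra.comul (R := k) (A := H)))

/-- The comultiplication of the bosonization `R # H`:
`Δ(r # h) = (r_{(1)} # r_{(2)(-1)} h_{(1)}) ⊗ (r_{(2)(0)} # h_{(2)})`. -/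
def smashComul (A : YDBialgebra k H R) :
    R ⊗[k] H →ₗ[k] (R ⊗[k] H) ⊗[k] (R ⊗[k] H) :=
  (TensorProduct.assoc k R H (R ⊗[k] H)).symm.toLinearMap ∘ₗ
    LinearMap.lTensor R (LinearMap.rTensor (R ⊗[k] H) (LinearMap.mul' k H)) ∘ₗ
    LinearMap.lTensor R (TensorProduct.tensorTensorTensorComm k H R H H).toLinearMap ∘ₗ
    (TensorProduct.assoc k R (H ⊗[k] R) (H ⊗[k] H)).toLinearMap ∘ₗ
    LinearMap.rTensor (H ⊗[k] H) (LinearMap.lTensor R A.coact) ∘ₗ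
    TensorProduct.map A.comul (Coalgebra.comul (R := k) (A := H))

/-- The counit of the bosonization `R # H`. -/
def smashCounit (A : YDBialgebra k H R) : R ⊗[k] H →ₗ[k] k :=
  (LinearMap.mul' k k) ∘ₗ TensorProduct.map A.counit (Coalgebra.counit (R := k) (A := H))

set_option maxHeartbeats 1000000
set_option synthInstance.maxHeartbeats 200000

namespace YDAux

open LinearMap TensorProduct

variable {k : Type*} [Field k] {H : Type*} [Ring H] [HopfAlgebra k H]
variable {R : Type*} [Ring R] [Algebra k R]

/-- The braided multiplication on `R ⊗ R`. -/
def mc (A : YDBialgebra k H R) : (R ⊗[k] R) ⊗[k] (R ⊗[k] R) →ₗ[k] R ⊗[k] R :=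
  (TensorProduct.map (LinearMap.mul' k R) (LinearMap.mul' k R)) ∘ₗ
    (TensorProduct.assoc k R R (R ⊗[k] R)).symm.toLinearMap ∘ₗ
    LinearMap.lTensor R ((TensorProduct.assoc k R R R).toLinearMap) ∘ₗ
    LinearMap.lTensor R (LinearMap.rTensor R A.braid) ∘ₗ
    LinearMap.lTensor R ((TensorProduct.assoc k R R R).symm.toLinearMap) ∘ₗ
    (TensorProduct.assoc k R R (R ⊗[k] R)).toLinearMap

lemma mc_tmul (A : YDBialgebra k H R) (a b u v : R) :
    mc A ((a ⊗ₜ[k] b) ⊗ₜ[k] (u ⊗ₜ[k] v)) =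
      TensorProduct.map (LinearMap.mulLeft k a) (LinearMap.mulRight k v)
        (A.braid (b ⊗ₜ[k] u)) := by
  simp only [mc, LinearMap.comp_apply, LinearEquiv.coe_coe, TensorProduct.assoc_tmul,
    LinearMap.lTensor_tmul, TensorProduct.assoc_symm_tmul, LinearMap.rTensor_tmul]
  induction A.braid (b ⊗ₜ[k] u) using TensorProduct.induction_on with
  | zero => simp only [TensorProduct.zero_tmul, TensorProduct.tmul_zero, map_zero]
  | tmul s t =>
      simp only [TensorProduct.assoc_tmul, TensorProduct.assoc_symm_tmul,
        TensorProduct.map_tmul, LinearMap.mul'_apply, LinearMap.mulLeft_apply,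
        LinearMap.mulRight_apply]
  | add x y hx hy =>
      simp only [TensorProduct.add_tmul, TensorProduct.tmul_add, map_add, hx, hy]

lemma comul_mul' (A : YDBialgebra k H R) :
    A.comul ∘ₗ LinearMap.mul' k R = mc A ∘ₗ TensorProduct.map A.comul A.comul := by
  apply TensorProduct.ext'
  intro x y
  simp only [LinearMap.comp_apply, LinearMap.mul'_apply, TensorProduct.map_tmul]
  rw [A.comul_mul x y]
  rfl

lemma comul_mul_apply (A : YDBialgebra k H R) (x y : R) :
    A.comul (x * y) = mc A (A.comul x ⊗ₜ[k] A.comul y) := by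
  have := LinearMap.congr_fun (comul_mul' A) (x ⊗ₜ[k] y)
  simpa using this

lemma braid_one_left (A : YDBialgebra k H R) (u : R) :
    A.braid ((1 : R) ⊗ₜ[k] u) = u ⊗ₜ[k] (1 : R) := by
  rw [A.braid_apply, A.coact_one]
  simp [A.act_one u]

lemma mc_one_snd (A : YDBialgebra k H R) (a : R) (w : R ⊗[k] R) :
    mc A ((a ⊗ₜ[k] (1 : R)) ⊗ₜ[k] w) = LinearMap.rTensor R (LinearMap.mulLeft k a) w := by
  induction w using TensorProduct.induction_on with
  | zero => simp
  | tmul u v => simp [mc_tmul, braid_one_left]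
  | add x y hx hy => simp only [TensorProduct.tmul_add, map_add, hx, hy]

lemma mc_mulLeft (A : YDBialgebra k H R) (a : R) (s w : R ⊗[k] R) :
    LinearMap.rTensor R (LinearMap.mulLeft k a) (mc A (s ⊗ₜ[k] w)) =
      mc A ((LinearMap.rTensor R (LinearMap.mulLeft k a) s) ⊗ₜ[k] w) := by
  induction s using TensorProduct.induction_on with
  | zero => simp
  | tmul c d =>
      induction w using TensorProduct.induction_on with
      | zero => simp
      | tmul u v =>
          simp only [mc_tmul, LinearMap.rTensor_tmul, LinearMap.mulLeft_apply]
          induction A.braid (d ⊗ₜ[k] u) using TensorProduct.induction_on with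
          | zero => simp
          | tmul s' t' => simp [mul_assoc]
          | add x y hx hy => simp only [map_add, hx, hy]
      | add x y hx hy => simp only [TensorProduct.tmul_add, map_add, hx, hy]
  | add x y hx hy => simp only [TensorProduct.add_tmul, map_add, hx, hy]

lemma mc_first_one (A : YDBialgebra k H R) (x b : R) (w : R ⊗[k] R) :
    mc A ((x ⊗ₜ[k] b) ⊗ₜ[k] w) =
      LinearMap.rTensor R (LinearMap.mulLeft k x) (mc A (((1 : R) ⊗ₜ[k] b) ⊗ₜ[k] w)) := by
  rw [mc_mulLeft]
  simp

lemma rmul_aux (u : R) (w : R ⊗[k] R) :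
    LinearMap.rTensor R (LinearMap.mul' k R)
        ((TensorProduct.assoc k R R R).symm (u ⊗ₜ[k] w)) =
      LinearMap.rTensor R (LinearMap.mulLeft k u) w := by
  induction w using TensorProduct.induction_on with
  | zero => simp
  | tmul a b => simp
  | add x y hx hy => simp only [TensorProduct.tmul_add, map_add, hx, hy]

/-- `x ↦ ε x • 1`. -/
def etaEps (A : YDBialgebra k H R) : R →ₗ[k] R :=
  LinearMap.toSpanSingleton k R 1 ∘ₗ A.counit

lemma etaEps_apply (A : YDBialgebra k H R) (x : R) : etaEps A x = A.counit x • 1 := rfl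

lemma rTensor_etaEps_comul (A : YDBialgebra k H R) (x : R) :
    LinearMap.rTensor R (etaEps A) (A.comul x) = (1 : R) ⊗ₜ[k] x := by
  have h : LinearMap.rTensor R (etaEps A) =
      (TensorProduct.mk k R R 1) ∘ₗ (TensorProduct.lid k R).toLinearMap ∘ₗ
        LinearMap.rTensor R A.counit := by
    apply TensorProduct.ext'
    intro u v
    simp only [LinearMap.rTensor_tmul, LinearMap.comp_apply, LinearEquiv.coe_coe,
      TensorProduct.lid_tmul, TensorProduct.mk_apply, etaEps_apply]
    rw [TensorProduct.smul_tmul]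
  rw [h]
  simp only [LinearMap.comp_apply, LinearEquiv.coe_coe]
  rw [A.comul_counit_left x]
  rfl

lemma mul_lTensor_etaEps_comul (A : YDBialgebra k H R) (x : R) :
    LinearMap.mul' k R (LinearMap.lTensor R (etaEps A) (A.comul x)) = x := by
  have h : LinearMap.mul' k R ∘ₗ LinearMap.lTensor R (etaEps A) =
      (TensorProduct.rid k R).toLinearMap ∘ₗ LinearMap.lTensor R A.counit := by
    apply TensorProduct.ext'
    intro u v
    simp only [LinearMap.comp_apply, LinearMap.lTensor_tmul, LinearMap.mul'_apply,
      LinearEquiv.coe_coe, TensorProduct.rid_tmul, etaEps_apply, Algebra.mul_smul_comm,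
      mul_one]
  have := LinearMap.congr_fun h (A.comul x)
  simp only [LinearMap.comp_apply, LinearEquiv.coe_coe] at this
  rw [this, A.comul_counit_right x]

lemma coassoc_symm (A : YDBialgebra k H R) (x : R) :
    (TensorProduct.assoc k R R R).symm (LinearMap.lTensor R A.comul (A.comul x)) =
      LinearMap.rTensor R A.comul (A.comul x) := by
  rw [← A.comul_coassoc x]
  simp

end YDAux
namespace YDAux

variable {k : Type*} [Field k] {H : Type*} [Ring H] [HopfAlgebra k H]
variable {R : Type*} [Ring R] [Algebra k R]

open LinearMap TensorProduct

lemma assoc_symm_rTensor_fst (f : R →ₗ[k] R) (t : R ⊗[k] (R ⊗[k] R)) :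
    (TensorProduct.assoc k R R R).symm (LinearMap.rTensor (R ⊗[k] R) f t) =
      LinearMap.rTensor R (LinearMap.rTensor R f) ((TensorProduct.assoc k R R R).symm t) := by
  induction t using TensorProduct.induction_on with
  | zero => simp
  | tmul a w =>
      induction w using TensorProduct.induction_on with
      | zero => simp
      | tmul u v => simp
      | add x y hx hy =>
          simp only [TensorProduct.tmul_add, map_add, hx, hy]
  | add x y hx hy => simp only [map_add, hx, hy]

lemma assoc_symm_lTensor_mid (f : R →ₗ[k] R) (t : R ⊗[k] (R ⊗[k] R)) :
    (TensorProduct.assoc k R R R).symm (LinearMap.lTensor R (LinearMap.rTensor R f) t) =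
      LinearMap.rTensor R (LinearMap.lTensor R f) ((TensorProduct.assoc k R R R).symm t) := by
  induction t using TensorProduct.induction_on with
  | zero => simp
  | tmul a w =>
      induction w using TensorProduct.induction_on with
      | zero => simp
      | tmul u v => simp
      | add x y hx hy =>
          simp only [TensorProduct.tmul_add, map_add, hx, hy]
  | add x y hx hy => simp only [map_add, hx, hy]

lemma S_left_eta (A : YDHopfAlgebra k H R) :
    LinearMap.mul' k R ∘ₗ LinearMap.rTensor R A.S ∘ₗ A.comul = etaEps A.toYDBialgebra := by
  apply LinearMap.ext; intro x
  simp only [LinearMap.comp_apply, etaEps_apply]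
  exact A.S_mul_left x

lemma S_right_eta (A : YDHopfAlgebra k H R) :
    LinearMap.mul' k R ∘ₗ LinearMap.lTensor R A.S ∘ₗ A.comul = etaEps A.toYDBialgebra := by
  apply LinearMap.ext; intro x
  simp only [LinearMap.comp_apply, etaEps_apply]
  exact A.S_mul_right x

/-- The map `a ⊗ u ↦ (S a) u⁽¹⁾ ⊗ u⁽²⁾`. -/
def Kmap (A : YDHopfAlgebra k H R) : R ⊗[k] R →ₗ[k] R ⊗[k] R :=
  LinearMap.rTensor R (LinearMap.mul' k R) ∘ₗ
    (TensorProduct.assoc k R R R).symm.toLinearMap ∘ₗ TensorProduct.map A.S A.comul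

lemma Kmap_tmul (A : YDHopfAlgebra k H R) (a u : R) :
    Kmap A (a ⊗ₜ[k] u) = LinearMap.rTensor R (LinearMap.mulLeft k (A.S a)) (A.comul u) := by
  simp only [Kmap, LinearMap.comp_apply, TensorProduct.map_tmul, LinearEquiv.coe_coe]
  exact rmul_aux _ _

lemma Kmap_comul (A : YDHopfAlgebra k H R) (c : R) :
    Kmap A (A.comul c) = (1 : R) ⊗ₜ[k] c := by
  have h1 : TensorProduct.map A.S A.comul =
      LinearMap.rTensor (R ⊗[k] R) A.S ∘ₗ LinearMap.lTensor R A.comul :=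
    (LinearMap.rTensor_comp_lTensor (f := A.S) (g := A.comul)).symm
  have h2 : LinearMap.rTensor R (LinearMap.mul' k R) ∘ₗ
        LinearMap.rTensor R (LinearMap.rTensor R A.S) ∘ₗ LinearMap.rTensor R A.comul =
      LinearMap.rTensor R (etaEps A.toYDBialgebra) := by
    rw [← LinearMap.rTensor_comp, ← LinearMap.rTensor_comp, ← S_left_eta A]
  rw [Kmap, LinearMap.comp_apply, LinearMap.comp_apply, h1, LinearMap.comp_apply,
    LinearEquiv.coe_coe, assoc_symm_rTensor_fst, coassoc_symm]
  have := LinearMap.congr_fun h2 (A.comul c)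
  simp only [LinearMap.comp_apply] at this
  rw [this, rTensor_etaEps_comul]

/-- `x ↦ S x ⊗ 1`. -/
def sigmaS (A : YDHopfAlgebra k H R) : R →ₗ[k] R ⊗[k] R :=
  (TensorProduct.mk k R R).flip 1 ∘ₗ A.S

lemma sigmaS_apply (A : YDHopfAlgebra k H R) (x : R) :
    sigmaS A x = A.S x ⊗ₜ[k] (1 : R) := rfl

lemma y1_eq (A : YDHopfAlgebra k H R) :
    mc A.toYDBialgebra ∘ₗ TensorProduct.map (sigmaS A)
        (mc A.toYDBialgebra ∘ₗ TensorProduct.map A.comul (A.comul ∘ₗ A.S)) =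
      mc A.toYDBialgebra ∘ₗ TensorProduct.map (Kmap A) (A.comul ∘ₗ A.S) ∘ₗ
        (TensorProduct.assoc k R R R).symm.toLinearMap := by
  apply LinearMap.ext; intro t
  induction t using TensorProduct.induction_on with
  | zero => simp
  | add x y hx hy => simp only [map_add, hx, hy]
  | tmul a w =>
      induction w using TensorProduct.induction_on with
      | zero => simp
      | add x y hx hy =>
          simp only [TensorProduct.tmul_add, map_add, hx, hy]
      | tmul u v =>
          simp only [LinearMap.comp_apply, LinearEquiv.coe_coe,
            TensorProduct.assoc_symm_tmul, TensorProduct.map_tmul, sigmaS_apply,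
            Kmap_tmul]
          rw [mc_one_snd, mc_mulLeft]

lemma Fdagger (A : YDHopfAlgebra k H R) (c : R) :
    mc A.toYDBialgebra
        (TensorProduct.map (TensorProduct.mk k R R 1) (A.comul ∘ₗ A.S) (A.comul c)) =
      A.S c ⊗ₜ[k] (1 : R) := by
  have hKc : Kmap A ∘ₗ A.comul = TensorProduct.mk k R R 1 :=
    LinearMap.ext (Kmap_comul A)
  rw [← hKc, ← LinearMap.map_comp_rTensor, LinearMap.comp_apply]
  rw [← coassoc_symm]
  have hy := LinearMap.congr_fun (y1_eq A).symm
      (LinearMap.lTensor R A.comul (A.comul c))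
  simp only [LinearMap.comp_apply, LinearEquiv.coe_coe] at hy
  rw [hy]
  have hmapl := LinearMap.congr_fun
    (LinearMap.map_comp_lTensor (f := sigmaS A)
      (g := mc A.toYDBialgebra ∘ₗ TensorProduct.map A.comul (A.comul ∘ₗ A.S))
      (g' := A.comul))
    (A.comul c)
  simp only [LinearMap.comp_apply] at hmapl
  rw [hmapl]
  have hinner : (mc A.toYDBialgebra ∘ₗ TensorProduct.map A.comul (A.comul ∘ₗ A.S)) ∘ₗ
      A.comul = LinearMap.toSpanSingleton k (R ⊗[k] R) ((1 : R) ⊗ₜ[k] 1) ∘ₗ A.counit := by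
    apply LinearMap.ext; intro v
    have hsplit : TensorProduct.map A.comul (A.comul ∘ₗ A.S) =
        TensorProduct.map A.comul A.comul ∘ₗ LinearMap.lTensor R A.S :=
      (LinearMap.map_comp_lTensor (f := A.comul) (g := A.comul) (g' := A.S)).symm
    simp only [LinearMap.comp_apply, hsplit, LinearMap.toSpanSingleton_apply]
    have hcm := LinearMap.congr_fun (comul_mul' A.toYDBialgebra).symm
      (LinearMap.lTensor R A.S (A.comul v))
    simp only [LinearMap.comp_apply] at hcm
    rw [hcm, A.S_mul_right v, map_smul, A.comul_one]
  rw [hinner]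
  have hfin : mc A.toYDBialgebra ∘ₗ TensorProduct.map (sigmaS A)
        (LinearMap.toSpanSingleton k (R ⊗[k] R) ((1 : R) ⊗ₜ[k] 1) ∘ₗ A.counit) =
      sigmaS A ∘ₗ (TensorProduct.rid k R).toLinearMap ∘ₗ LinearMap.lTensor R A.counit := by
    apply TensorProduct.ext'
    intro u v
    simp only [LinearMap.comp_apply, TensorProduct.map_tmul, LinearMap.lTensor_tmul,
      LinearEquiv.coe_coe, TensorProduct.rid_tmul, LinearMap.toSpanSingleton_apply,
      sigmaS_apply, map_smul, TensorProduct.tmul_smul]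
    rw [mc_one_snd]
    simp
  have := LinearMap.congr_fun hfin (A.comul c)
  simp only [LinearMap.comp_apply, LinearEquiv.coe_coe] at this
  rw [this, A.comul_counit_right c, sigmaS_apply]

end YDAux
namespace YDAux

variable {k : Type*} [Field k] {H : Type*} [Ring H] [HopfAlgebra k H]
variable {R : Type*} [Ring R] [Algebra k R]

open LinearMap TensorProduct

/-- `Θ(r) = r⁽¹⁾ S(π r⁽²⁾)`. -/
def Theta (A : YDHopfAlgebra k H R) (π : R →ₐ[k] R) : R →ₗ[k] R :=
  LinearMap.mul' k R ∘ₗ LinearMap.lTensor R (A.S ∘ₗ π.toLinearMap) ∘ₗ A.comul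

/-- `ρ(r) = r⁽¹⁾ ⊗ π(r⁽²⁾)`. -/
def rhoMap (A : YDHopfAlgebra k H R) (π : R →ₐ[k] R) : R →ₗ[k] R ⊗[k] R :=
  LinearMap.lTensor R π.toLinearMap ∘ₗ A.comul

/-- `Φ(r) = Θ(r⁽¹⁾) ⊗ π(r⁽²⁾)`. -/
def Phi (A : YDHopfAlgebra k H R) (π : R →ₐ[k] R) : R →ₗ[k] R ⊗[k] R :=
  TensorProduct.map (Theta A π) π.toLinearMap ∘ₗ A.comul

def qmap (A : YDHopfAlgebra k H R) (π : R →ₐ[k] R) : R →ₗ[k] R ⊗[k] R :=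
  TensorProduct.map (A.S ∘ₗ π.toLinearMap) π.toLinearMap ∘ₗ A.comul

def Emap (A : YDHopfAlgebra k H R) (π : R →ₐ[k] R) : R ⊗[k] R →ₗ[k] R ⊗[k] R :=
  LinearMap.rTensor R (LinearMap.mul' k R) ∘ₗ
    (TensorProduct.assoc k R R R).symm.toLinearMap ∘ₗ LinearMap.lTensor R (qmap A π)

def G2map (A : YDHopfAlgebra k H R) : R ⊗[k] R →ₗ[k] R ⊗[k] R :=
  LinearMap.rTensor R (LinearMap.mul' k R) ∘ₗ
    (TensorProduct.assoc k R R R).symm.toLinearMap ∘ₗ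
    LinearMap.lTensor R (LinearMap.rTensor R A.S ∘ₗ A.comul)

lemma Emap_tmul (A : YDHopfAlgebra k H R) (π : R →ₐ[k] R) (g z : R) :
    Emap A π (g ⊗ₜ[k] z) = LinearMap.rTensor R (LinearMap.mulLeft k g) (qmap A π z) := by
  simp only [Emap, LinearMap.comp_apply, LinearMap.lTensor_tmul, LinearEquiv.coe_coe]
  exact rmul_aux _ _

lemma G2map_tmul (A : YDHopfAlgebra k H R) (u v : R) :
    G2map A (u ⊗ₜ[k] v) =
      LinearMap.rTensor R (LinearMap.mulLeft k u) (LinearMap.rTensor R A.S (A.comul v)) := by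
  simp only [G2map, LinearMap.comp_apply, LinearMap.lTensor_tmul, LinearEquiv.coe_coe]
  exact rmul_aux _ _

lemma G2map_comul (A : YDHopfAlgebra k H R) (c : R) :
    G2map A (A.comul c) = (1 : R) ⊗ₜ[k] c := by
  have h2 : LinearMap.rTensor R (LinearMap.mul' k R) ∘ₗ
        LinearMap.rTensor R (LinearMap.lTensor R A.S) ∘ₗ LinearMap.rTensor R A.comul =
      LinearMap.rTensor R (etaEps A.toYDBialgebra) := by
    rw [← LinearMap.rTensor_comp, ← LinearMap.rTensor_comp, ← S_right_eta A]
  have hsplit : LinearMap.lTensor R (LinearMap.rTensor R A.S ∘ₗ A.comul) =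
      LinearMap.lTensor R (LinearMap.rTensor R A.S) ∘ₗ LinearMap.lTensor R A.comul :=
    LinearMap.lTensor_comp R _ _
  rw [G2map, LinearMap.comp_apply, LinearMap.comp_apply, hsplit, LinearMap.comp_apply,
    LinearEquiv.coe_coe, assoc_symm_lTensor_mid, coassoc_symm]
  have := LinearMap.congr_fun h2 (A.comul c)
  simp only [LinearMap.comp_apply] at this
  rw [this, rTensor_etaEps_comul]

section PiLemmas

variable (A : YDHopfAlgebra k H R) (π : R →ₐ[k] R)

lemma g_eta (hπcomul : ∀ x : R, A.comul (π x) =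
      (TensorProduct.map π.toLinearMap π.toLinearMap) (A.comul x))
    (hπcounit : ∀ x : R, A.counit (π x) = A.counit x) :
    LinearMap.mul' k R ∘ₗ qmap A π = etaEps A.toYDBialgebra := by
  apply LinearMap.ext; intro x
  have hsplit : TensorProduct.map (A.S ∘ₗ π.toLinearMap) π.toLinearMap =
      LinearMap.rTensor R A.S ∘ₗ TensorProduct.map π.toLinearMap π.toLinearMap := by
    apply TensorProduct.ext'; intro u v; simp
  simp only [LinearMap.comp_apply, qmap, hsplit, etaEps_apply]
  rw [← hπcomul x, A.S_mul_left (π x), hπcounit x]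

lemma mu_Phi (hπcomul : ∀ x : R, A.comul (π x) =
      (TensorProduct.map π.toLinearMap π.toLinearMap) (A.comul x))
    (hπcounit : ∀ x : R, A.counit (π x) = A.counit x) (r : R) :
    LinearMap.mul' k R (Phi A π r) = r := by
  have hsplit : TensorProduct.map (Theta A π) π.toLinearMap =
      TensorProduct.map (LinearMap.mul' k R ∘ₗ LinearMap.lTensor R (A.S ∘ₗ π.toLinearMap))
          π.toLinearMap ∘ₗ LinearMap.rTensor R A.comul :=
    (LinearMap.map_comp_rTensor
      (f := LinearMap.mul' k R ∘ₗ LinearMap.lTensor R (A.S ∘ₗ π.toLinearMap))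
      (g := π.toLinearMap) (f' := A.comul)).symm
  have H1 : LinearMap.mul' k R ∘ₗ
        TensorProduct.map (LinearMap.mul' k R ∘ₗ LinearMap.lTensor R (A.S ∘ₗ π.toLinearMap))
          π.toLinearMap ∘ₗ (TensorProduct.assoc k R R R).symm.toLinearMap =
      LinearMap.mul' k R ∘ₗ LinearMap.lTensor R (LinearMap.mul' k R ∘ₗ
        TensorProduct.map (A.S ∘ₗ π.toLinearMap) π.toLinearMap) := by
    apply LinearMap.ext; intro t
    induction t using TensorProduct.induction_on with
    | zero => simp
    | add x y hx hy => simp only [map_add, hx, hy]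
    | tmul a w =>
        induction w using TensorProduct.induction_on with
        | zero => simp
        | add x y hx hy => simp only [TensorProduct.tmul_add, map_add, hx, hy]
        | tmul u v =>
            simp only [LinearMap.comp_apply, LinearEquiv.coe_coe,
              TensorProduct.assoc_symm_tmul, TensorProduct.map_tmul,
              LinearMap.lTensor_tmul, LinearMap.mul'_apply, mul_assoc]
  have e1 : Phi A π r = TensorProduct.map
      (LinearMap.mul' k R ∘ₗ LinearMap.lTensor R (A.S ∘ₗ π.toLinearMap)) π.toLinearMap
      ((TensorProduct.assoc k R R R).symm (LinearMap.lTensor R A.comul (A.comul r))) := by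
    rw [Phi, LinearMap.comp_apply, hsplit, LinearMap.comp_apply, coassoc_symm]
  rw [e1]
  have := LinearMap.congr_fun H1 (LinearMap.lTensor R A.comul (A.comul r))
  simp only [LinearMap.comp_apply, LinearEquiv.coe_coe] at this
  rw [this]
  have hl : LinearMap.lTensor R (LinearMap.mul' k R ∘ₗ
        TensorProduct.map (A.S ∘ₗ π.toLinearMap) π.toLinearMap)
        (LinearMap.lTensor R A.comul (A.comul r)) =
      LinearMap.lTensor R (LinearMap.mul' k R ∘ₗ qmap A π) (A.comul r) := by
    rw [← LinearMap.comp_apply, ← LinearMap.lTensor_comp]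
    rfl
  rw [hl, g_eta A π hπcomul hπcounit]
  exact mul_lTensor_etaEps_comul A.toYDBialgebra r

lemma rho_Sp (hpp : π.toLinearMap ∘ₗ π.toLinearMap = π.toLinearMap)
    (hπcomul : ∀ x : R, A.comul (π x) =
      (TensorProduct.map π.toLinearMap π.toLinearMap) (A.comul x))
    (hπS : ∀ x : R, π (A.S x) = A.S (π x)) (x : R) :
    LinearMap.lTensor R π.toLinearMap (A.comul (A.S (π x))) = A.comul (A.S (π x)) := by
  have hz : π (A.S (π x)) = A.S (π x) := by
    rw [hπS (π x)]
    have := LinearMap.congr_fun hpp x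
    simp only [LinearMap.comp_apply, AlgHom.toLinearMap_apply] at this
    rw [this]
  have h1 := hπcomul (A.S (π x))
  rw [hz] at h1
  have hcomp : LinearMap.lTensor R π.toLinearMap ∘ₗ
      TensorProduct.map π.toLinearMap π.toLinearMap =
      TensorProduct.map π.toLinearMap π.toLinearMap := by
    rw [LinearMap.lTensor_comp_map, hpp]
  calc LinearMap.lTensor R π.toLinearMap (A.comul (A.S (π x)))
      = LinearMap.lTensor R π.toLinearMap
          (TensorProduct.map π.toLinearMap π.toLinearMap (A.comul (A.S (π x)))) := by
        rw [← h1]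
    _ = TensorProduct.map π.toLinearMap π.toLinearMap (A.comul (A.S (π x))) :=
        LinearMap.congr_fun hcomp _
    _ = A.comul (A.S (π x)) := h1.symm

lemma mc_pi (hπcoact : ∀ x : R, A.coact (π x) =
      (LinearMap.lTensor H π.toLinearMap) (A.coact x))
    (t : (R ⊗[k] R) ⊗[k] (R ⊗[k] R)) :
    LinearMap.lTensor R π.toLinearMap (mc A.toYDBialgebra t) =
      mc A.toYDBialgebra
        (TensorProduct.map (LinearMap.lTensor R π.toLinearMap)
          (LinearMap.lTensor R π.toLinearMap) t) := by
  induction t using TensorProduct.induction_on with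
  | zero => simp
  | add x y hx hy => simp only [map_add, hx, hy]
  | tmul s w =>
      induction s using TensorProduct.induction_on with
      | zero => simp
      | add x y hx hy => simp only [TensorProduct.add_tmul, map_add, hx, hy]
      | tmul a b =>
          induction w using TensorProduct.induction_on with
          | zero => simp
          | add x y hx hy => simp only [TensorProduct.tmul_add, map_add, hx, hy]
          | tmul u v =>
              simp only [TensorProduct.map_tmul, LinearMap.lTensor_tmul]
              rw [mc_tmul, mc_tmul, A.braid_apply, A.braid_apply]
              simp only [AlgHom.toLinearMap_apply]
              rw [hπcoact b]
              have hcmp : LinearMap.lTensor R π.toLinearMap ∘ₗ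
                    TensorProduct.map (LinearMap.mulLeft k a) (LinearMap.mulRight k v) ∘ₗ
                    LinearMap.rTensor R (A.act.flip u) =
                  TensorProduct.map (LinearMap.mulLeft k a)
                      (LinearMap.mulRight k (π v)) ∘ₗ
                    LinearMap.rTensor R (A.act.flip u) ∘ₗ
                    LinearMap.lTensor H π.toLinearMap := by
                apply TensorProduct.ext'; intro h r
                simp only [LinearMap.comp_apply, LinearMap.rTensor_tmul,
                  LinearMap.lTensor_tmul, TensorProduct.map_tmul,
                  LinearMap.mulLeft_apply, LinearMap.mulRight_apply, LinearMap.flip_apply,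
                  AlgHom.toLinearMap_apply, map_mul]
              have := LinearMap.congr_fun hcmp (A.coact b)
              simp only [LinearMap.comp_apply] at this
              rw [this]

end PiLemmas

end YDAux
namespace YDAux

variable {k : Type*} [Field k] {H : Type*} [Ring H] [HopfAlgebra k H]
variable {R : Type*} [Ring R] [Algebra k R]

open LinearMap TensorProduct

section PiLemmas2

variable (A : YDHopfAlgebra k H R) (π : R →ₐ[k] R)

lemma rho_Theta (hpp : π.toLinearMap ∘ₗ π.toLinearMap = π.toLinearMap)
    (hπcomul : ∀ x : R, A.comul (π x) =
      (TensorProduct.map π.toLinearMap π.toLinearMap) (A.comul x))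
    (hπS : ∀ x : R, π (A.S x) = A.S (π x))
    (hπcoact : ∀ x : R, A.coact (π x) = (LinearMap.lTensor H π.toLinearMap) (A.coact x))
    (r : R) :
    rhoMap A π (Theta A π r) = Theta A π r ⊗ₜ[k] (1 : R) := by
  have h1 : A.comul (Theta A π r) =
      mc A.toYDBialgebra (TensorProduct.map A.comul (A.comul ∘ₗ (A.S ∘ₗ π.toLinearMap))
        (A.comul r)) := by
    have hc := LinearMap.congr_fun (comul_mul' A.toYDBialgebra)
      (LinearMap.lTensor R (A.S ∘ₗ π.toLinearMap) (A.comul r))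
    simp only [LinearMap.comp_apply] at hc
    have hm := LinearMap.congr_fun
      (LinearMap.map_comp_lTensor (f := A.comul) (g := A.comul)
        (g' := A.S ∘ₗ π.toLinearMap)) (A.comul r)
    simp only [LinearMap.comp_apply] at hm
    simp only [Theta, LinearMap.comp_apply]
    rw [hc, hm]
  have hrs : LinearMap.lTensor R π.toLinearMap ∘ₗ (A.comul ∘ₗ (A.S ∘ₗ π.toLinearMap)) =
      A.comul ∘ₗ (A.S ∘ₗ π.toLinearMap) := by
    apply LinearMap.ext; intro x
    simpa only [LinearMap.comp_apply, AlgHom.toLinearMap_apply] using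
      rho_Sp A π hpp hπcomul hπS x
  have step2 : rhoMap A π (Theta A π r) =
      mc A.toYDBialgebra (TensorProduct.map (LinearMap.lTensor R π.toLinearMap ∘ₗ A.comul)
        (A.comul ∘ₗ (A.S ∘ₗ π.toLinearMap)) (A.comul r)) := by
    simp only [rhoMap, LinearMap.comp_apply, h1]
    rw [mc_pi A π hπcoact]
    have hmm := LinearMap.congr_fun
      ((TensorProduct.map_comp (LinearMap.lTensor R π.toLinearMap)
        (LinearMap.lTensor R π.toLinearMap) A.comul (A.comul ∘ₗ (A.S ∘ₗ π.toLinearMap))).symm)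
      (A.comul r)
    simp only [LinearMap.comp_apply] at hmm
    rw [hmm, hrs]
  rw [step2]
  have hm2 := LinearMap.congr_fun
    (LinearMap.map_comp_rTensor (f := LinearMap.lTensor R π.toLinearMap)
      (g := A.comul ∘ₗ (A.S ∘ₗ π.toLinearMap)) (f' := A.comul)) (A.comul r)
  simp only [LinearMap.comp_apply] at hm2
  rw [← hm2, ← coassoc_symm]
  -- step5'
  have step5' : mc A.toYDBialgebra ∘ₗ
        TensorProduct.map (LinearMap.lTensor R π.toLinearMap)
          (A.comul ∘ₗ (A.S ∘ₗ π.toLinearMap)) ∘ₗ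
        (TensorProduct.assoc k R R R).symm.toLinearMap =
      LinearMap.rTensor R (LinearMap.mul' k R) ∘ₗ
        (TensorProduct.assoc k R R R).symm.toLinearMap ∘ₗ
        LinearMap.lTensor R (mc A.toYDBialgebra ∘ₗ
          TensorProduct.map (TensorProduct.mk k R R 1 ∘ₗ π.toLinearMap)
            (A.comul ∘ₗ (A.S ∘ₗ π.toLinearMap))) := by
    apply LinearMap.ext; intro t
    induction t using TensorProduct.induction_on with
    | zero => simp
    | add x y hx hy => simp only [map_add, hx, hy]
    | tmul a w =>
        induction w using TensorProduct.induction_on with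
        | zero => simp
        | add x y hx hy => simp only [TensorProduct.tmul_add, map_add, hx, hy]
        | tmul t₁ t₂ =>
            simp only [LinearMap.comp_apply, LinearEquiv.coe_coe,
              TensorProduct.assoc_symm_tmul, TensorProduct.map_tmul,
              LinearMap.lTensor_tmul]
            rw [mc_first_one, rmul_aux]
            rfl
  have := LinearMap.congr_fun step5' (LinearMap.lTensor R A.comul (A.comul r))
  simp only [LinearMap.comp_apply, LinearEquiv.coe_coe] at this
  rw [this]
  -- combine the two lTensor's
  have hlt : LinearMap.lTensor R (mc A.toYDBialgebra ∘ₗ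
        TensorProduct.map (TensorProduct.mk k R R 1 ∘ₗ π.toLinearMap)
          (A.comul ∘ₗ (A.S ∘ₗ π.toLinearMap)))
        (LinearMap.lTensor R A.comul (A.comul r)) =
      LinearMap.lTensor R (sigmaS A ∘ₗ π.toLinearMap) (A.comul r) := by
    have hcomp := LinearMap.congr_fun (LinearMap.lTensor_comp R
        (mc A.toYDBialgebra ∘ₗ TensorProduct.map (TensorProduct.mk k R R 1 ∘ₗ π.toLinearMap)
          (A.comul ∘ₗ (A.S ∘ₗ π.toLinearMap))) A.comul) (A.comul r)
    simp only [LinearMap.comp_apply] at hcomp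
    rw [← hcomp]
    have hfg : (mc A.toYDBialgebra ∘ₗ
          TensorProduct.map (TensorProduct.mk k R R 1 ∘ₗ π.toLinearMap)
            (A.comul ∘ₗ (A.S ∘ₗ π.toLinearMap))) ∘ₗ A.comul =
        sigmaS A ∘ₗ π.toLinearMap := by
      apply LinearMap.ext; intro t
      simp only [LinearMap.comp_apply]
      have hsplit := LinearMap.congr_fun
        ((TensorProduct.map_comp (TensorProduct.mk k R R 1) (A.comul ∘ₗ A.S)
          π.toLinearMap π.toLinearMap).symm) (A.comul t)
      simp only [LinearMap.comp_apply] at hsplit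
      have hcc : TensorProduct.map (TensorProduct.mk k R R 1 ∘ₗ π.toLinearMap)
          (A.comul ∘ₗ (A.S ∘ₗ π.toLinearMap)) (A.comul t) =
          TensorProduct.map (TensorProduct.mk k R R 1) (A.comul ∘ₗ A.S)
            (TensorProduct.map π.toLinearMap π.toLinearMap (A.comul t)) := hsplit.symm
      rw [hcc, ← hπcomul t, Fdagger A (π t)]
      simp only [sigmaS_apply, AlgHom.toLinearMap_apply]
    rw [hfg]
  rw [hlt]
  -- final evaluation
  have hfin : ∀ w : R ⊗[k] R,
      LinearMap.rTensor R (LinearMap.mul' k R)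
        ((TensorProduct.assoc k R R R).symm
          (LinearMap.lTensor R (sigmaS A ∘ₗ π.toLinearMap) w)) =
      (LinearMap.mul' k R (LinearMap.lTensor R (A.S ∘ₗ π.toLinearMap) w)) ⊗ₜ[k] (1 : R) := by
    intro w
    induction w using TensorProduct.induction_on with
    | zero => simp
    | add x y hx hy => simp only [map_add, hx, hy, TensorProduct.add_tmul]
    | tmul x t =>
        simp only [LinearMap.lTensor_tmul, LinearMap.comp_apply, sigmaS_apply,
          LinearEquiv.coe_coe, TensorProduct.assoc_symm_tmul, LinearMap.rTensor_tmul,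
          LinearMap.mul'_apply]
  rw [hfin (A.comul r)]
  rfl

lemma Phi_alt : Phi A π = Emap A π ∘ₗ A.comul := by
  apply LinearMap.ext; intro r
  have hsplit := LinearMap.congr_fun
    ((LinearMap.map_comp_rTensor
      (f := LinearMap.mul' k R ∘ₗ LinearMap.lTensor R (A.S ∘ₗ π.toLinearMap))
      (g := π.toLinearMap) (f' := A.comul))) (A.comul r)
  simp only [LinearMap.comp_apply] at hsplit
  have H2 : TensorProduct.map
        (LinearMap.mul' k R ∘ₗ LinearMap.lTensor R (A.S ∘ₗ π.toLinearMap)) π.toLinearMap ∘ₗ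
        (TensorProduct.assoc k R R R).symm.toLinearMap =
      LinearMap.rTensor R (LinearMap.mul' k R) ∘ₗ
        (TensorProduct.assoc k R R R).symm.toLinearMap ∘ₗ
        LinearMap.lTensor R
          (TensorProduct.map (A.S ∘ₗ π.toLinearMap) π.toLinearMap) := by
    apply LinearMap.ext; intro t
    induction t using TensorProduct.induction_on with
    | zero => simp
    | add x y hx hy => simp only [map_add, hx, hy]
    | tmul a w =>
        induction w using TensorProduct.induction_on with
        | zero => simp
        | add x y hx hy => simp only [TensorProduct.tmul_add, map_add, hx, hy]
        | tmul u v =>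
            simp only [LinearMap.comp_apply, LinearEquiv.coe_coe,
              TensorProduct.assoc_symm_tmul, TensorProduct.map_tmul,
              LinearMap.lTensor_tmul, LinearMap.rTensor_tmul, LinearMap.mul'_apply]
  simp only [Phi, Emap, LinearMap.comp_apply, LinearEquiv.coe_coe]
  have hq2 : LinearMap.lTensor R (qmap A π) (A.comul r) =
      LinearMap.lTensor R (TensorProduct.map (A.S ∘ₗ π.toLinearMap) π.toLinearMap)
        (LinearMap.lTensor R A.comul (A.comul r)) := by
    have := LinearMap.congr_fun (LinearMap.lTensor_comp R
      (TensorProduct.map (A.S ∘ₗ π.toLinearMap) π.toLinearMap) A.comul) (A.comul r)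
    simp only [LinearMap.comp_apply] at this
    exact this
  rw [hq2]
  have h2a := LinearMap.congr_fun H2 (LinearMap.lTensor R A.comul (A.comul r))
  simp only [LinearMap.comp_apply, LinearEquiv.coe_coe] at h2a
  rw [← h2a, coassoc_symm, hsplit]
  rfl

lemma qmap_pi (hpp : π.toLinearMap ∘ₗ π.toLinearMap = π.toLinearMap)
    (hπcomul : ∀ x : R, A.comul (π x) =
      (TensorProduct.map π.toLinearMap π.toLinearMap) (A.comul x)) (y : R) :
    qmap A π (π y) = qmap A π y := by
  have hcmp : TensorProduct.map (A.S ∘ₗ π.toLinearMap) π.toLinearMap ∘ₗ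
      TensorProduct.map π.toLinearMap π.toLinearMap =
      TensorProduct.map (A.S ∘ₗ π.toLinearMap) π.toLinearMap := by
    rw [← TensorProduct.map_comp,
      show (A.S ∘ₗ π.toLinearMap) ∘ₗ π.toLinearMap =
        A.S ∘ₗ (π.toLinearMap ∘ₗ π.toLinearMap) from rfl, hpp]
  simp only [qmap, LinearMap.comp_apply]
  rw [hπcomul y]
  exact LinearMap.congr_fun hcmp (A.comul y)

lemma qmap_B (B : Subalgebra k R)
    (hπid : ∀ x ∈ B, π x = x)
    (hBcomul : ∀ x ∈ B, A.comul x ∈ LinearMap.range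
      (TensorProduct.map (Subalgebra.toSubmodule B).subtype
        (Subalgebra.toSubmodule B).subtype))
    (v : R) (hv : v ∈ B) :
    qmap A π v = LinearMap.rTensor R A.S (A.comul v) := by
  obtain ⟨w₁, hw₁⟩ := hBcomul v hv
  have hcmp : TensorProduct.map (A.S ∘ₗ π.toLinearMap) π.toLinearMap ∘ₗ
      TensorProduct.map (Subalgebra.toSubmodule B).subtype
        (Subalgebra.toSubmodule B).subtype =
      LinearMap.rTensor R A.S ∘ₗ TensorProduct.map (Subalgebra.toSubmodule B).subtype
        (Subalgebra.toSubmodule B).subtype := by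
    apply TensorProduct.ext'; intro u' v'
    simp only [LinearMap.comp_apply, TensorProduct.map_tmul, Submodule.coe_subtype,
      LinearMap.rTensor_tmul, AlgHom.toLinearMap_apply]
    rw [hπid u' u'.2, hπid v' v'.2]
  simp only [qmap, LinearMap.comp_apply]
  rw [← hw₁]
  exact LinearMap.congr_fun hcmp w₁

end PiLemmas2

end YDAux
namespace YDAux

variable {k : Type*} [Field k] {H : Type*} [Ring H] [HopfAlgebra k H]
variable {R : Type*} [Ring R] [Algebra k R]

open LinearMap TensorProduct

lemma Phi_mul (A : YDHopfAlgebra k H R) (π : R →ₐ[k] R) (B : Subalgebra k R)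
    (hpp : π.toLinearMap ∘ₗ π.toLinearMap = π.toLinearMap)
    (hπcomul : ∀ x : R, A.comul (π x) =
      (TensorProduct.map π.toLinearMap π.toLinearMap) (A.comul x))
    (hπcoact : ∀ x : R, A.coact (π x) = (LinearMap.lTensor H π.toLinearMap) (A.coact x))
    (hπid : ∀ x ∈ B, π x = x)
    (hBcomul : ∀ x ∈ B, A.comul x ∈ LinearMap.range
      (TensorProduct.map (Subalgebra.toSubmodule B).subtype
        (Subalgebra.toSubmodule B).subtype))
    (x : R) (hx : LinearMap.lTensor R π.toLinearMap (A.comul x) = x ⊗ₜ[k] 1)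
    (b : R) (hb : b ∈ B) :
    Phi A π (x * b) = x ⊗ₜ[k] b := by
  rw [Phi_alt A π]
  simp only [LinearMap.comp_apply]
  rw [comul_mul_apply]
  obtain ⟨w₀, hw₀⟩ := hBcomul b hb
  rw [← hw₀]
  have key : ∀ w : (Subalgebra.toSubmodule B) ⊗[k] (Subalgebra.toSubmodule B),
      Emap A π (mc A.toYDBialgebra (A.comul x ⊗ₜ[k]
        (TensorProduct.map (Subalgebra.toSubmodule B).subtype
          (Subalgebra.toSubmodule B).subtype w))) =
      LinearMap.rTensor R (LinearMap.mulLeft k x)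
        (G2map A (TensorProduct.map (Subalgebra.toSubmodule B).subtype
          (Subalgebra.toSubmodule B).subtype w)) := by
    intro w
    induction w using TensorProduct.induction_on with
    | zero => simp
    | add y z hy hz => simp only [map_add, TensorProduct.tmul_add, hy, hz]
    | tmul u v =>
        simp only [TensorProduct.map_tmul, Submodule.coe_subtype]
        have hDp : Emap A π ∘ₗ mc A.toYDBialgebra ∘ₗ
            ((TensorProduct.mk k (R ⊗[k] R) (R ⊗[k] R)).flip
              ((u : R) ⊗ₜ[k] (v : R))) ∘ₗ
            LinearMap.lTensor R π.toLinearMap =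
            Emap A π ∘ₗ mc A.toYDBialgebra ∘ₗ
            ((TensorProduct.mk k (R ⊗[k] R) (R ⊗[k] R)).flip
              ((u : R) ⊗ₜ[k] (v : R))) := by
          apply TensorProduct.ext'; intro a t
          simp only [LinearMap.comp_apply, LinearMap.lTensor_tmul, LinearMap.flip_apply,
            TensorProduct.mk_apply]
          rw [mc_tmul, mc_tmul, A.braid_apply, A.braid_apply]
          simp only [AlgHom.toLinearMap_apply]
          rw [hπcoact t]
          have hcmp2 : Emap A π ∘ₗ TensorProduct.map (LinearMap.mulLeft k a)
                (LinearMap.mulRight k (v : R)) ∘ₗ LinearMap.rTensor R (A.act.flip (u : R)) ∘ₗ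
                LinearMap.lTensor H π.toLinearMap =
              Emap A π ∘ₗ TensorProduct.map (LinearMap.mulLeft k a)
                (LinearMap.mulRight k (v : R)) ∘ₗ
                LinearMap.rTensor R (A.act.flip (u : R)) := by
            apply TensorProduct.ext'; intro h r
            simp only [LinearMap.comp_apply, LinearMap.lTensor_tmul, LinearMap.rTensor_tmul,
              TensorProduct.map_tmul, LinearMap.mulLeft_apply, LinearMap.mulRight_apply,
              LinearMap.flip_apply, AlgHom.toLinearMap_apply]
            rw [Emap_tmul, Emap_tmul]
            have hmul : (π r) * (v : R) = π (r * (v : R)) := by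
              rw [map_mul, hπid (v : R) v.2]
            rw [hmul, qmap_pi A π hpp hπcomul]
          have := LinearMap.congr_fun hcmp2 (A.coact t)
          simp only [LinearMap.comp_apply] at this
          exact this
        have hxx := LinearMap.congr_fun hDp (A.comul x)
        simp only [LinearMap.comp_apply, LinearMap.flip_apply, TensorProduct.mk_apply]
          at hxx
        rw [hx] at hxx
        rw [← hxx, mc_one_snd]
        simp only [LinearMap.rTensor_tmul, LinearMap.mulLeft_apply]
        rw [Emap_tmul, qmap_B A π B hπid hBcomul (v : R) v.2, G2map_tmul]
        rw [show LinearMap.mulLeft k (x * (u : R)) =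
            LinearMap.mulLeft k x ∘ₗ LinearMap.mulLeft k (u : R) from
          LinearMap.ext fun z => mul_assoc x (u : R) z, LinearMap.rTensor_comp,
          LinearMap.comp_apply]
  rw [key w₀, hw₀, G2map_comul]
  simp only [LinearMap.rTensor_tmul, LinearMap.mulLeft_apply, mul_one]

end YDAux
/-- Let `H` be a Hopf algebra with bijective antipode, `R` a Hopf
algebra in the Yetter–Drinfeld category over `H`, `B ⊆ R` a Hopf subalgebra in the
category and `π : R → B` a morphism of braided Hopf algebras with `π|_B = id_B`.
Let `R^{co B} = {r ∈ R : r^{(1)} ⊗ π(r^{(2)}) = r ⊗ 1}`.  If `E ⊆ R` is a right coideal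
subalgebra in the category with `B ⊆ E`, then the multiplication map
`(R^{co B} ∩ E) ⊗ B → E` is a linear isomorphism. -/
theorem ydHopf_coinvariants_mul_bijective
    {k : Type*} [Field k] {H : Type*} [Ring H] [HopfAlgebra k H]
    (hSH : Function.Bijective (HopfAlgebra.antipode (R := k) (A := H)))
    {R : Type*} [Ring R] [Algebra k R]
    (A : YDHopfAlgebra k H R)
    (B : Subalgebra k R)
    (hBact : ∀ (h : H), ∀ x ∈ B, A.act h x ∈ B)
    (hBcoact : ∀ x ∈ B, A.coact x ∈
      LinearMap.range (LinearMap.lTensor H (Subalgebra.toSubmodule B).subtype))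
    (hBcomul : ∀ x ∈ B, A.comul x ∈ LinearMap.range
      (TensorProduct.map (Subalgebra.toSubmodule B).subtype
        (Subalgebra.toSubmodule B).subtype))
    (hBS : ∀ x ∈ B, A.S x ∈ B)
    (π : R →ₐ[k] R)
    (hπB : ∀ x : R, π x ∈ B)
    (hπid : ∀ x ∈ B, π x = x)
    (hπcomul : ∀ x : R, A.comul (π x) =
      (TensorProduct.map π.toLinearMap π.toLinearMap) (A.comul x))
    (hπcounit : ∀ x : R, A.counit (π x) = A.counit x)
    (hπS : ∀ x : R, π (A.S x) = A.S (π x))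
    (hπact : ∀ (h : H) (x : R), π (A.act h x) = A.act h (π x))
    (hπcoact : ∀ x : R, A.coact (π x) = (LinearMap.lTensor H π.toLinearMap) (A.coact x))
    (E : Subalgebra k R)
    (hEact : ∀ (h : H), ∀ x ∈ E, A.act h x ∈ E)
    (hEcoact : ∀ x ∈ E, A.coact x ∈
      LinearMap.range (LinearMap.lTensor H (Subalgebra.toSubmodule E).subtype))
    (hEcoideal : ∀ x ∈ E, A.comul x ∈
      LinearMap.range (LinearMap.rTensor R (Subalgebra.toSubmodule E).subtype))
    (hBE : B ≤ E) :
    Function.Injective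
      ((LinearMap.mul' k R) ∘ₗ
        TensorProduct.map
          ((LinearMap.ker ((LinearMap.lTensor R π.toLinearMap ∘ₗ A.comul) -
              (TensorProduct.mk k R R).flip 1) ⊓ Subalgebra.toSubmodule E)).subtype
          (Subalgebra.toSubmodule B).subtype) ∧
    LinearMap.range
      ((LinearMap.mul' k R) ∘ₗ
        TensorProduct.map
          ((LinearMap.ker ((LinearMap.lTensor R π.toLinearMap ∘ₗ A.comul) -
              (TensorProduct.mk k R R).flip 1) ⊓ Subalgebra.toSubmodule E)).subtype
          (Subalgebra.toSubmodule B).subtype) = Subalgebra.toSubmodule E := by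
  classical
  open LinearMap TensorProduct YDAux in
  set X : Submodule k R :=
    LinearMap.ker ((LinearMap.lTensor R π.toLinearMap ∘ₗ A.comul) -
      (TensorProduct.mk k R R).flip 1) ⊓ Subalgebra.toSubmodule E with hX
  have hpp : π.toLinearMap ∘ₗ π.toLinearMap = π.toLinearMap := by
    apply LinearMap.ext; intro x
    simp only [LinearMap.comp_apply, AlgHom.toLinearMap_apply]
    exact hπid _ (hπB x)
  have hker : ∀ z : R,
      (z ∈ LinearMap.ker ((LinearMap.lTensor R π.toLinearMap ∘ₗ A.comul) -
        (TensorProduct.mk k R R).flip 1)) ↔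
      LinearMap.lTensor R π.toLinearMap (A.comul z) = z ⊗ₜ[k] 1 := by
    intro z
    rw [LinearMap.mem_ker, LinearMap.sub_apply, sub_eq_zero]
    simp only [LinearMap.comp_apply, LinearMap.flip_apply, TensorProduct.mk_apply]
  have hThetaE : ∀ e ∈ E, YDAux.Theta A π e ∈ E := by
    intro e he
    obtain ⟨w, hw⟩ := hEcoideal e he
    have heq : YDAux.Theta A π e = LinearMap.mul' k R
        (LinearMap.lTensor R (A.S ∘ₗ π.toLinearMap)
          (LinearMap.rTensor R (Subalgebra.toSubmodule E).subtype w)) := by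
      simp only [YDAux.Theta, LinearMap.comp_apply]
      rw [hw]
    rw [heq]
    clear heq hw
    induction w using TensorProduct.induction_on with
    | zero => simpa using zero_mem E
    | tmul f y =>
        simp only [LinearMap.rTensor_tmul, LinearMap.lTensor_tmul, LinearMap.mul'_apply,
          LinearMap.comp_apply, Submodule.coe_subtype, AlgHom.toLinearMap_apply]
        exact mul_mem f.2 (hBE (hBS _ (hπB y)))
    | add s t hs ht =>
        simp only [map_add]
        exact add_mem hs ht
  have hcomp : YDAux.Phi A π ∘ₗ ((LinearMap.mul' k R) ∘ₗ
        TensorProduct.map X.subtype (Subalgebra.toSubmodule B).subtype) =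
      TensorProduct.map X.subtype (Subalgebra.toSubmodule B).subtype := by
    apply TensorProduct.ext'
    intro xe b
    simp only [LinearMap.comp_apply, TensorProduct.map_tmul, LinearMap.mul'_apply,
      Submodule.coe_subtype]
    exact YDAux.Phi_mul A π B hpp hπcomul hπcoact hπid hBcomul (xe : R)
      ((hker (xe : R)).mp xe.2.1) (b : R) b.2
  constructor
  · intro z₁ z₂ h
    have h2 : TensorProduct.map X.subtype (Subalgebra.toSubmodule B).subtype z₁ =
        TensorProduct.map X.subtype (Subalgebra.toSubmodule B).subtype z₂ := by
      calc TensorProduct.map X.subtype (Subalgebra.toSubmodule B).subtype z₁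
          = YDAux.Phi A π (((LinearMap.mul' k R) ∘ₗ
              TensorProduct.map X.subtype (Subalgebra.toSubmodule B).subtype) z₁) :=
            (LinearMap.congr_fun hcomp z₁).symm
        _ = YDAux.Phi A π (((LinearMap.mul' k R) ∘ₗ
              TensorProduct.map X.subtype (Subalgebra.toSubmodule B).subtype) z₂) := by
            rw [h]
        _ = TensorProduct.map X.subtype (Subalgebra.toSubmodule B).subtype z₂ :=
            LinearMap.congr_fun hcomp z₂
    have hinj : Function.Injective
        (TensorProduct.map X.subtype (Subalgebra.toSubmodule B).subtype) := by
      rw [← LinearMap.rTensor_comp_lTensor, LinearMap.coe_comp]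
      exact Function.Injective.comp
        (Module.Flat.rTensor_preserves_injective_linearMap X.subtype
          (Submodule.injective_subtype X))
        (Module.Flat.lTensor_preserves_injective_linearMap
          (Subalgebra.toSubmodule B).subtype
          (Submodule.injective_subtype (Subalgebra.toSubmodule B)))
    exact hinj h2
  · apply le_antisymm
    · rintro y ⟨z, rfl⟩
      induction z using TensorProduct.induction_on with
      | zero => simpa using zero_mem (Subalgebra.toSubmodule E)
      | tmul xe b =>
          simp only [LinearMap.comp_apply, TensorProduct.map_tmul, LinearMap.mul'_apply,
            Submodule.coe_subtype, Subalgebra.mem_toSubmodule]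
          exact mul_mem xe.2.2 (hBE b.2)
      | add s t hs ht =>
          simp only [map_add]
          exact add_mem hs ht
    · intro r hr
      rw [Subalgebra.mem_toSubmodule] at hr
      obtain ⟨w, hw⟩ := hEcoideal r hr
      have hphi : YDAux.Phi A π r ∈ LinearMap.range
          (TensorProduct.map X.subtype (Subalgebra.toSubmodule B).subtype) := by
        have heq : YDAux.Phi A π r = TensorProduct.map (YDAux.Theta A π) π.toLinearMap
            (LinearMap.rTensor R (Subalgebra.toSubmodule E).subtype w) := by
          simp only [YDAux.Phi, LinearMap.comp_apply]
          rw [hw]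
        rw [heq]
        clear heq hw
        induction w using TensorProduct.induction_on with
        | zero => simpa using zero_mem _
        | tmul f y =>
            simp only [LinearMap.rTensor_tmul, TensorProduct.map_tmul,
              Submodule.coe_subtype]
            refine ⟨(⟨YDAux.Theta A π (f : R), Submodule.mem_inf.mpr ⟨?_, ?_⟩⟩ :
                X) ⊗ₜ[k] (⟨π y, hπB y⟩ : Subalgebra.toSubmodule B), ?_⟩
            · rw [hker]
              have := YDAux.rho_Theta A π hpp hπcomul hπS hπcoact (f : R)
              simpa only [YDAux.rhoMap, LinearMap.comp_apply] using this
            · exact hThetaE (f : R) f.2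
            · simp only [TensorProduct.map_tmul, Submodule.coe_subtype,
                AlgHom.toLinearMap_apply]
        | add s t hs ht =>
            simp only [map_add]
            exact add_mem hs ht
      obtain ⟨z, hz⟩ := hphi
      refine ⟨z, ?_⟩
      simp only [LinearMap.comp_apply]
      rw [hz]
      exact YDAux.mu_Phi A π hπcomul hπcounit r
end
end

section
/- Let α, β be simple roots of a finite-dimensional semisimple Lie algebra with α ≠ β, and q not a root of unity. In U_q(g), for 1 ≤ n ≤ −a_{αβ}, the following commutator identity holds: q_α^{n-1}(1 − q_α^{-2(−a_{αβ}−n+1)}) (ad E_α^{(n-1)})(E_β) = (q_α^{-1} − q_α^{-3}) ( F_α K_α (ad E_α^{(n)})(E_β) − q^{(nα+β, α)} (ad E_α^{(n)})(E_β) F_α K_α ). -/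
noncomputable section

/-- Generators of the quantized enveloping algebra `U_q(g)`:  `E_α`, `F_α`,
`K_α`, `K_α⁻¹` for the simple roots `α ∈ Π`. -/
inductive UqGen (Φ : Type*) : Type _
  | E : Φ → UqGen Φ
  | F : Φ → UqGen Φ
  | K : Φ → UqGen Φ
  | Kinv : Φ → UqGen Φ

variable {k : Type*} [Field k]

/-- The quantum integer `[n]_t = (t^n - t^{-n}) / (t - t⁻¹)`. -/
def qInt (t : k) (n : ℕ) : k := (t ^ n - t⁻¹ ^ n) / (t - t⁻¹)

/-- The quantum factorial `[n]_t!`. -/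
def qFact (t : k) : ℕ → k
  | 0 => 1
  | n + 1 => qFact t n * qInt t (n + 1)

/-- The quantum binomial coefficient. -/
def qBinom (t : k) (n s : ℕ) : k := qFact t n / (qFact t s * qFact t (n - s))

variable (k)

/-- The defining relations of `U_q(g)` (Jantzen, *Lectures on Quantum Groups*, 4.3),
for the data:  `q ∈ k`, `d α` the symmetrizing integers, `ip α β = (α, β)` the invariant
pairing, and `A α β = a_{αβ}` the Cartan matrix. -/
inductive UqRel (Φ : Type*) [DecidableEq Φ] (q : k) (d : Φ → ℕ) (ip : Φ → Φ → ℤ)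
    (A : Φ → Φ → ℤ) : FreeAlgebra k (UqGen Φ) → FreeAlgebra k (UqGen Φ) → Prop
  | KKinv (α : Φ) : UqRel Φ q d ip A
      (FreeAlgebra.ι k (UqGen.K α) * FreeAlgebra.ι k (UqGen.Kinv α)) 1
  | KinvK (α : Φ) : UqRel Φ q d ip A
      (FreeAlgebra.ι k (UqGen.Kinv α) * FreeAlgebra.ι k (UqGen.K α)) 1
  | KK (α β : Φ) : UqRel Φ q d ip A
      (FreeAlgebra.ι k (UqGen.K α) * FreeAlgebra.ι k (UqGen.K β))
      (FreeAlgebra.ι k (UqGen.K β) * FreeAlgebra.ι k (UqGen.K α))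
  | KE (α β : Φ) : UqRel Φ q d ip A
      (FreeAlgebra.ι k (UqGen.K α) * FreeAlgebra.ι k (UqGen.E β))
      ((q ^ ip α β) • (FreeAlgebra.ι k (UqGen.E β) * FreeAlgebra.ι k (UqGen.K α)))
  | KF (α β : Φ) : UqRel Φ q d ip A
      (FreeAlgebra.ι k (UqGen.K α) * FreeAlgebra.ι k (UqGen.F β))
      ((q ^ (-ip α β)) • (FreeAlgebra.ι k (UqGen.F β) * FreeAlgebra.ι k (UqGen.K α)))
  | EF (α β : Φ) : UqRel Φ q d ip A
      (FreeAlgebra.ι k (UqGen.E α) * FreeAlgebra.ι k (UqGen.F β) -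
        FreeAlgebra.ι k (UqGen.F β) * FreeAlgebra.ι k (UqGen.E α))
      (if α = β then
        ((q ^ d α - (q ^ d α)⁻¹)⁻¹) •
          (FreeAlgebra.ι k (UqGen.K α) - FreeAlgebra.ι k (UqGen.Kinv α))
       else 0)
  | SerreE (α β : Φ) (h : α ≠ β) : UqRel Φ q d ip A
      (∑ s ∈ Finset.range ((1 - A α β).toNat + 1),
        ((-1 : k) ^ s * qBinom (q ^ d α) (1 - A α β).toNat s) •
          (FreeAlgebra.ι k (UqGen.E α) ^ s * FreeAlgebra.ι k (UqGen.E β) *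
            FreeAlgebra.ι k (UqGen.E α) ^ ((1 - A α β).toNat - s))) 0
  | SerreF (α β : Φ) (h : α ≠ β) : UqRel Φ q d ip A
      (∑ s ∈ Finset.range ((1 - A α β).toNat + 1),
        ((-1 : k) ^ s * qBinom (q ^ d α) (1 - A α β).toNat s) •
          (FreeAlgebra.ι k (UqGen.F α) ^ s * FreeAlgebra.ι k (UqGen.F β) *
            FreeAlgebra.ι k (UqGen.F α) ^ ((1 - A α β).toNat - s))) 0

/-- The quantized enveloping algebra `U_q(g)`, presented by generators and relations. -/
abbrev UqAlg (Φ : Type*) [DecidableEq Φ] (q : k) (d : Φ → ℕ) (ip : Φ → Φ → ℤ)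
    (A : Φ → Φ → ℤ) : Type _ := RingQuot (UqRel k Φ q d ip A)

namespace UqAlg

variable {Φ : Type*} [DecidableEq Φ] (q : k) (d : Φ → ℕ) (ip : Φ → Φ → ℤ) (A : Φ → Φ → ℤ)

/-- The generator `E_α` of `U_q(g)`. -/
def gE (α : Φ) : UqAlg k Φ q d ip A :=
  RingQuot.mkAlgHom k (UqRel k Φ q d ip A) (FreeAlgebra.ι k (UqGen.E α))

/-- The generator `F_α` of `U_q(g)`. -/
def gF (α : Φ) : UqAlg k Φ q d ip A :=
  RingQuot.mkAlgHom k (UqRel k Φ q d ip A) (FreeAlgebra.ι k (UqGen.F α))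

/-- The generator `K_α` of `U_q(g)`. -/
def gK (α : Φ) : UqAlg k Φ q d ip A :=
  RingQuot.mkAlgHom k (UqRel k Φ q d ip A) (FreeAlgebra.ι k (UqGen.K α))

/-- The generator `K_α⁻¹` of `U_q(g)`. -/
def gKinv (α : Φ) : UqAlg k Φ q d ip A :=
  RingQuot.mkAlgHom k (UqRel k Φ q d ip A) (FreeAlgebra.ι k (UqGen.Kinv α))

end UqAlg


namespace UqAlg

variable {Φ : Type*} [DecidableEq Φ] (q : k) (d : Φ → ℕ) (ip : Φ → Φ → ℤ) (A : Φ → Φ → ℤ)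

/-- The left adjoint action of `E_α`:  `(ad E_α)(u) = E_α u - K_α u K_α⁻¹ E_α`. -/
def adE (α : Φ) (u : UqAlg k Φ q d ip A) : UqAlg k Φ q d ip A :=
  gE k q d ip A α * u - gK k q d ip A α * u * gKinv k q d ip A α * gE k q d ip A α

/-- The adjoint action of the divided power `E_α^{(n)} = E_α^n / [n]_α!`:
`(ad E_α^{(n)}) = ([n]_α!)⁻¹ (ad E_α)^n`. -/
def adDivE (α : Φ) (n : ℕ) (x : UqAlg k Φ q d ip A) : UqAlg k Φ q d ip A :=
  (qFact (q ^ d α) n)⁻¹ • ((adE k q d ip A α)^[n] x)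

end UqAlg


namespace UqAlg

section Relations

variable {k : Type*} [Field k] {Φ : Type*} [DecidableEq Φ]
variable (q : k) (d : Φ → ℕ) (ip : Φ → Φ → ℤ) (A : Φ → Φ → ℤ)

lemma rel_eq {x y : FreeAlgebra k (UqGen Φ)} (h : UqRel k Φ q d ip A x y) :
    RingQuot.mkAlgHom k (UqRel k Φ q d ip A) x = RingQuot.mkAlgHom k (UqRel k Φ q d ip A) y :=
  RingQuot.mkAlgHom_rel k h

lemma gK_gKinv (α : Φ) : gK k q d ip A α * gKinv k q d ip A α = 1 := by
  have := rel_eq q d ip A (UqRel.KKinv (k := k) α)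
  simpa [gK, gKinv, map_mul] using this

lemma gKinv_gK (α : Φ) : gKinv k q d ip A α * gK k q d ip A α = 1 := by
  have := rel_eq q d ip A (UqRel.KinvK (k := k) α)
  simpa [gK, gKinv, map_mul] using this

lemma gK_gE (α β : Φ) :
    gK k q d ip A α * gE k q d ip A β = (q ^ ip α β) • (gE k q d ip A β * gK k q d ip A α) := by
  have := rel_eq q d ip A (UqRel.KE (k := k) α β)
  simpa [gK, gE, map_mul, map_smul] using this

lemma gK_gF (α β : Φ) :
    gK k q d ip A α * gF k q d ip A β = (q ^ (-ip α β)) • (gF k q d ip A β * gK k q d ip A α) := by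
  have := rel_eq q d ip A (UqRel.KF (k := k) α β)
  simpa [gK, gF, map_mul, map_smul] using this

lemma gE_gF (α β : Φ) :
    gE k q d ip A α * gF k q d ip A β - gF k q d ip A β * gE k q d ip A α =
      (if α = β then
        ((q ^ d α - (q ^ d α)⁻¹)⁻¹) • (gK k q d ip A α - gKinv k q d ip A α) else 0) := by
  have := rel_eq q d ip A (UqRel.EF (k := k) α β)
  split_ifs with h
  · subst h
    simpa [gE, gF, gK, gKinv, map_mul, map_sub, map_smul] using this
  · simpa [gE, gF, map_mul, map_sub, h] using this

end Relations

end UqAlg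

namespace UqAlg

section Adjoint

variable {k : Type*} [Field k] {Φ : Type*} [DecidableEq Φ]
variable (q : k) (d : Φ → ℕ) (ip : Φ → Φ → ℤ) (A : Φ → Φ → ℤ)

lemma gKinv_comm (α : Φ) (u : UqAlg k Φ q d ip A) (c : k) (hc : c ≠ 0)
    (h : gK k q d ip A α * u = c • (u * gK k q d ip A α)) :
    gKinv k q d ip A α * u = c⁻¹ • (u * gKinv k q d ip A α) := by
  have h1 : u * gKinv k q d ip A α = c • (gKinv k q d ip A α * u) := by
    calc u * gKinv k q d ip A α
        = gKinv k q d ip A α * (gK k q d ip A α * u) * gKinv k q d ip A α := by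
          rw [← mul_assoc, gKinv_gK, one_mul]
      _ = c • (gKinv k q d ip A α * (u * (gK k q d ip A α * gKinv k q d ip A α))) := by
          rw [h]; simp [mul_smul_comm, smul_mul_assoc, mul_assoc]
      _ = c • (gKinv k q d ip A α * u) := by rw [gK_gKinv, mul_one]
  rw [h1, smul_smul, inv_mul_cancel₀ hc, one_smul]

lemma adE_eq (α : Φ) (u : UqAlg k Φ q d ip A) (c : k)
    (h : gK k q d ip A α * u = c • (u * gK k q d ip A α)) :
    adE k q d ip A α u = gE k q d ip A α * u - c • (u * gE k q d ip A α) := by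
  have h2 : gK k q d ip A α * u * gKinv k q d ip A α = c • u := by
    rw [h, smul_mul_assoc, mul_assoc, gK_gKinv, mul_one]
  rw [adE, h2, smul_mul_assoc]

lemma gK_iterate_adE (hq0 : q ≠ 0) (α β : Φ) (n : ℕ) :
    gK k q d ip A α * (adE k q d ip A α)^[n] (gE k q d ip A β) =
      (q ^ (ip α β + n * ip α α)) •
        ((adE k q d ip A α)^[n] (gE k q d ip A β) * gK k q d ip A α) := by
  induction n with
  | zero => simpa using gK_gE q d ip A α β
  | succ n ih =>
    set v := (adE k q d ip A α)^[n] (gE k q d ip A β) with hv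
    have hstep : (adE k q d ip A α)^[n+1] (gE k q d ip A β) = adE k q d ip A α v :=
      Function.iterate_succ_apply' _ n _
    rw [hstep, adE_eq q d ip A α v _ ih]
    set c : k := q ^ (ip α β + n * ip α α) with hc
    have hcne : c ≠ 0 := by rw [hc]; exact zpow_ne_zero _ hq0
    have hKE : gK k q d ip A α * gE k q d ip A α =
        (q ^ ip α α) • (gE k q d ip A α * gK k q d ip A α) := gK_gE q d ip A α α
    have e1 : gK k q d ip A α * (gE k q d ip A α * v) =
        ((q ^ ip α α) * c) • (gE k q d ip A α * v * gK k q d ip A α) := by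
      rw [← mul_assoc, hKE, smul_mul_assoc, mul_assoc, ih]
      simp [smul_smul, mul_assoc]
    have e2 : gK k q d ip A α * (v * gE k q d ip A α) =
        (c * (q ^ ip α α)) • (v * gE k q d ip A α * gK k q d ip A α) := by
      rw [← mul_assoc, ih, smul_mul_assoc, mul_assoc, hKE]
      rw [mul_smul_comm, smul_smul, ← mul_assoc]
    simp only [mul_sub, e1, e2, mul_smul_comm, smul_smul, sub_mul, smul_mul_assoc, smul_sub]
    rw [hc]
    simp only [← zpow_add₀ hq0]
    congr 2
    · congr 1
      push_cast
      ring
    · congr 1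
      push_cast
      ring

end Adjoint

end UqAlg

namespace UqAlg

section Comm

variable {k : Type*} [Field k] {Φ : Type*} [DecidableEq Φ]
variable (q : k) (d : Φ → ℕ) (ip : Φ → Φ → ℤ) (A : Φ → Φ → ℤ)

/-- Abstract one-step commutator computation in any `k`-algebra. -/
lemma step {R : Type*} [Ring R] [Algebra k R] (E F K Ki v vp : R) (a c cq s : k)
    (hIH : v * F - F * v = a • (vp * Ki))
    (hEF : E * F - F * E = s • (K - Ki))
    (hW : K * v = c • (v * K))
    (hWi : Ki * v = c⁻¹ • (v * Ki))
    (hKiE : Ki * E = cq⁻¹ • (E * Ki)) :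
    (E * v - c • (v * E)) * F - F * (E * v - c • (v * E)) =
      a • ((E * vp) * Ki) - ((c * cq⁻¹) * a) • ((vp * E) * Ki) +
        ((c - c⁻¹) * s) • (v * Ki) := by
  have hvF : v * F = F * v + a • (vp * Ki) := by rw [← hIH]; abel
  have hFE : F * E = E * F - s • (K - Ki) := by rw [← hEF]; abel
  have P1 : (E * v) * F = E * (F * v) + a • ((E * vp) * Ki) := by
    rw [mul_assoc, hvF, mul_add, mul_smul_comm, mul_assoc E vp Ki]
  have P2 : F * (E * v) = E * (F * v) - (s * c) • (v * K) + (s * c⁻¹) • (v * Ki) := by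
    rw [← mul_assoc, hFE, sub_mul, mul_assoc, smul_sub, sub_mul, smul_mul_assoc,
      smul_mul_assoc, hW, hWi, smul_smul, smul_smul]
    abel
  have P3 : (v * E) * F = v * (F * E) + s • (v * K) - s • (v * Ki) := by
    have hEF' : E * F = F * E + s • (K - Ki) := by rw [← hEF]; abel
    rw [mul_assoc, hEF', mul_add, mul_smul_comm, mul_sub, smul_sub]
    abel
  have P4 : F * (v * E) = v * (F * E) - (a * cq⁻¹) • ((vp * E) * Ki) := by
    have hFv : F * v = v * F - a • (vp * Ki) := by rw [← hIH]; abel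
    rw [← mul_assoc, hFv, sub_mul, mul_assoc, smul_mul_assoc, mul_assoc, hKiE,
      mul_smul_comm, smul_smul, ← mul_assoc, ← mul_assoc]
  rw [sub_mul, mul_sub, smul_mul_assoc, mul_smul_comm, P1, P2, P3, P4]
  match_scalars <;> ring

lemma comm_iterate_adE (hq0 : q ≠ 0) (α β : Φ) (hαβ : α ≠ β) (n : ℕ) :
    (adE k q d ip A α)^[n] (gE k q d ip A β) * gF k q d ip A α
      - gF k q d ip A α * (adE k q d ip A α)^[n] (gE k q d ip A β) =
    (∑ j ∈ Finset.range n,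
        (q ^ (ip α β + j * ip α α) - (q ^ (ip α β + j * ip α α))⁻¹) *
          (q ^ d α - (q ^ d α)⁻¹)⁻¹) •
      ((adE k q d ip A α)^[n - 1] (gE k q d ip A β) * gKinv k q d ip A α) := by
  induction n with
  | zero =>
    have h := gE_gF q d ip A β α
    rw [if_neg (Ne.symm hαβ)] at h
    simpa using h
  | succ n ih =>
    have hwt := gK_iterate_adE q d ip A hq0 α β n
    have hcne : (q ^ (ip α β + n * ip α α) : k) ≠ 0 := zpow_ne_zero _ hq0
    have hwti := gKinv_comm q d ip A α _ _ hcne hwt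
    have hKiE := gKinv_comm q d ip A α _ _ (zpow_ne_zero (ip α α) hq0) (gK_gE q d ip A α α)
    have hEF : gE k q d ip A α * gF k q d ip A α - gF k q d ip A α * gE k q d ip A α =
        ((q ^ d α - (q ^ d α)⁻¹)⁻¹) • (gK k q d ip A α - gKinv k q d ip A α) := by
      simpa using gE_gF q d ip A α α
    have hv1 : (adE k q d ip A α)^[n+1] (gE k q d ip A β) =
        gE k q d ip A α * (adE k q d ip A α)^[n] (gE k q d ip A β) -
          (q ^ (ip α β + n * ip α α)) •
            ((adE k q d ip A α)^[n] (gE k q d ip A β) * gE k q d ip A α) := by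
      rw [Function.iterate_succ_apply', adE_eq q d ip A α _ _ hwt]
    rw [hv1, step _ _ _ _ _ _ _ _ _ _ ih hEF hwt hwti hKiE, Finset.sum_range_succ]
    simp only [Nat.add_sub_cancel]
    rcases n with _ | m
    · norm_num
    · simp only [Nat.add_sub_cancel]
      have hwtm := gK_iterate_adE q d ip A hq0 α β m
      have hvm : (adE k q d ip A α)^[m+1] (gE k q d ip A β) =
          gE k q d ip A α * (adE k q d ip A α)^[m] (gE k q d ip A β) -
            (q ^ (ip α β + m * ip α α)) •
              ((adE k q d ip A α)^[m] (gE k q d ip A β) * gE k q d ip A α) := by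
        rw [Function.iterate_succ_apply', adE_eq q d ip A α _ _ hwtm]
      have hccq : (q ^ (ip α β + ((m:ℤ)+1) * ip α α) : k) * (q ^ (ip α α))⁻¹ =
          q ^ (ip α β + m * ip α α) := by
        rw [← zpow_neg, ← zpow_add₀ hq0]
        congr 1
        ring
      rw [hvm]
      push_cast
      rw [hccq]
      simp only [sub_mul, smul_mul_assoc, smul_sub]
      match_scalars <;> ring

end Comm

end UqAlg

open UqAlg

/-- Let `α ≠ β` be simple roots of a finite-dimensional complex
semisimple Lie algebra (with symmetrizable Cartan matrix `A`, symmetrizers `d` and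
invariant pairing `ip`, positive definite) and `q` not a root of unity.  In `U_q(g)`,
for `1 ≤ n ≤ -a_{αβ}` the following commutator identity holds:
`q_α^{n-1} (1 - q_α^{-2(-a_{αβ}-n+1)}) (ad E_α^{(n-1)})(E_β)
  = (q_α^{-1} - q_α^{-3}) (F_α K_α (ad E_α^{(n)})(E_β)
      - q^{(nα+β, α)} (ad E_α^{(n)})(E_β) F_α K_α)`. -/
theorem uq_adjoint_commutator_identity
    {Φ : Type*} [Fintype Φ] [DecidableEq Φ]
    (q : k) (d : Φ → ℕ) (ip : Φ → Φ → ℤ) (A : Φ → Φ → ℤ)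
    -- generalized Cartan matrix, symmetrizable, of finite type
    (hA2 : ∀ α, A α α = 2)
    (hAoff : ∀ α β, α ≠ β → A α β ≤ 0)
    (hA0 : ∀ α β, A α β = 0 ↔ A β α = 0)
    (hd : ∀ α, 1 ≤ d α)
    (hsym : ∀ α β, (d α : ℤ) * A α β = ip α β)
    (hipsymm : ∀ α β, ip α β = ip β α)
    (hposdef : ∀ v : Φ → ℚ, v ≠ 0 →
      0 < ∑ α, ∑ β, ((d α : ℚ) * (A α β : ℚ)) * v α * v β)
    -- `q` is nonzero and not a root of unity, and the characteristic conditions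
    (hq0 : q ≠ 0)
    (hqroot : ∀ n : ℕ, 1 ≤ n → q ^ n ≠ 1)
    (hchar2 : (2 : k) ≠ 0)
    (hcharG2 : (∃ α β, A α β = -3) → (3 : k) ≠ 0)
    (α β : Φ) (hαβ : α ≠ β)
    (n : ℕ) (hn1 : 1 ≤ n) (hn : (n : ℤ) ≤ -(A α β)) :
    ((q ^ d α) ^ (n - 1) *
        (1 - ((q ^ d α)⁻¹) ^ (2 * ((-(A α β)).toNat - n + 1)))) •
      adDivE k q d ip A α (n - 1) (gE k q d ip A β) =
    ((q ^ d α)⁻¹ - ((q ^ d α)⁻¹) ^ 3) •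
      (gF k q d ip A α * gK k q d ip A α *
          adDivE k q d ip A α n (gE k q d ip A β) -
        (q ^ (2 * (n : ℤ) * (d α : ℤ) + ip β α)) •
          (adDivE k q d ip A α n (gE k q d ip A β) *
            (gF k q d ip A α * gK k q d ip A α))) := by
  classical
  obtain ⟨n', rfl⟩ : ∃ n', n = n' + 1 := ⟨n - 1, (Nat.succ_pred_eq_of_pos hn1).symm⟩
  have ht : (q ^ d α : k) ≠ 0 := pow_ne_zero _ hq0
  have hipaa : ip α α = (d α : ℤ) * 2 := by rw [← hsym α α, hA2 α]
  have hipab : ip α β = (d α : ℤ) * A α β := (hsym α β).symm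
  obtain ⟨r, hr⟩ : ∃ r, (-(A α β)).toNat = n' + 1 + r :=
    ⟨(-(A α β)).toNat - (n' + 1), by omega⟩
  have hAab : A α β = -((n' : ℤ) + 1 + r) := by omega
  -- basic nonvanishing facts about powers of t := q ^ d α
  have htm1 : ∀ m : ℕ, 1 ≤ m → (q ^ d α : k) ^ m ≠ 1 := by
    intro m hm
    rw [← pow_mul]
    exact hqroot _ (by have := hd α; exact Nat.one_le_iff_ne_zero.mpr (by positivity))
  have hpow_ne : ∀ m : ℕ, 1 ≤ m → (q ^ d α : k) ^ m - ((q ^ d α : k) ^ m)⁻¹ ≠ 0 := by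
    intro m hm h
    have hz : ((q ^ d α : k) ^ m) ≠ 0 := pow_ne_zero _ ht
    rw [sub_eq_zero] at h
    have h2 : (q ^ d α : k) ^ (m + m) = 1 := by
      rw [pow_add]
      nth_rewrite 2 [h]
      exact mul_inv_cancel₀ hz
    exact htm1 (m + m) (by omega) h2
  have hqint_ne : ∀ m : ℕ, 1 ≤ m → qInt (q ^ d α : k) m ≠ 0 := by
    intro m hm
    rw [qInt, inv_pow, div_ne_zero_iff]
    refine ⟨hpow_ne m hm, ?_⟩
    have := hpow_ne 1 le_rfl
    simpa using this
  have hfact_ne : ∀ m : ℕ, qFact (q ^ d α : k) m ≠ 0 := by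
    intro m
    induction m with
    | zero => simp [qFact]
    | succ m ihm => exact mul_ne_zero ihm (hqint_ne (m + 1) (by omega))
  have hT2 : ((q ^ d α : k) ^ 2 - 1) ≠ 0 := sub_ne_zero.mpr (htm1 2 (by omega))
  -- conversion of the weights to powers of t
  have hqw : ∀ j : ℕ, (q : k) ^ (ip α β + (j : ℤ) * ip α α) =
      (q ^ d α : k) ^ (2 * j) * ((q ^ d α : k) ^ (n' + 1 + r))⁻¹ := by
    intro j
    have he : ip α β + (j : ℤ) * ip α α =
        ((d α * (2 * j) : ℕ) : ℤ) + (-((d α * (n' + 1 + r) : ℕ) : ℤ)) := by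
      rw [hipab, hipaa, hAab]
      push_cast
      ring
    rw [he, zpow_add₀ hq0, zpow_neg, zpow_natCast, zpow_natCast,
      pow_mul q (d α) (2 * j), pow_mul q (d α) (n' + 1 + r)]
  -- the algebra part
  have hwt := gK_iterate_adE q d ip A hq0 α β (n' + 1)
  have hcomm := comm_iterate_adE q d ip A hq0 α β hαβ (n' + 1)
  simp only [Nat.add_sub_cancel] at hcomm
  simp only [adDivE, Nat.add_sub_cancel, hr,
    show n' + 1 + r - (n' + 1) + 1 = r + 1 from by omega]
  set F := gF k q d ip A α
  set K := gK k q d ip A α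
  set Ki := gKinv k q d ip A α
  set v : UqAlg k Φ q d ip A := (adE k q d ip A α)^[n' + 1] (gE k q d ip A β) with hv
  set vp : UqAlg k Φ q d ip A := (adE k q d ip A α)^[n'] (gE k q d ip A β) with hvp
  set a : k := ∑ j ∈ Finset.range (n' + 1),
      ((q : k) ^ (ip α β + (j : ℤ) * ip α α) - ((q : k) ^ (ip α β + (j : ℤ) * ip α α))⁻¹) *
        ((q : k) ^ d α - ((q : k) ^ d α)⁻¹)⁻¹ with hadef
  set c : k := (q : k) ^ (ip α β + ((n' + 1 : ℕ) : ℤ) * ip α α) with hcdef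
  have hce : (q : k) ^ (2 * ((n' + 1 : ℕ) : ℤ) * ((d α : ℕ) : ℤ) + ip β α) = c := by
    rw [hcdef]
    congr 1
    rw [hipsymm β α, hipab, hipaa, hAab]
    push_cast
    ring
  have hKiK : Ki * K = 1 := gKinv_gK q d ip A α
  have hvF : v * F = F * v + a • (vp * Ki) := by rw [← hcomm]; abel
  have hFKv : F * K * v = c • ((F * v) * K) := by
    rw [mul_assoc, hwt, mul_smul_comm, ← mul_assoc F v K]
  have hinner : F * K * ((qFact (q ^ d α : k) (n' + 1))⁻¹ • v) -
      (q : k) ^ (2 * ((n' + 1 : ℕ) : ℤ) * ((d α : ℕ) : ℤ) + ip β α) •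
        (((qFact (q ^ d α : k) (n' + 1))⁻¹ • v) * (F * K)) =
      (-(c * (qFact (q ^ d α : k) (n' + 1))⁻¹ * a)) • vp := by
    rw [hce, mul_smul_comm, hFKv, smul_mul_assoc, ← mul_assoc v F K, hvF, add_mul,
      smul_mul_assoc, mul_assoc vp Ki K, hKiK, mul_one]
    match_scalars <;> ring
  rw [hinner, smul_smul, smul_smul]
  congr 1
  -- now the scalar identity
  have hqI : qInt (q ^ d α : k) (n' + 1) ≠ 0 := hqint_ne (n' + 1) (by omega)
  have hf' : qFact (q ^ d α : k) n' ≠ 0 := hfact_ne n'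
  have hx : ((q ^ d α : k) ^ (n' + 1)) ≠ 0 := pow_ne_zero _ ht
  have hy : ((q ^ d α : k) ^ (n' + 1 + r)) ≠ 0 := pow_ne_zero _ ht
  have hqIval : qInt (q ^ d α : k) (n' + 1) =
      ((q ^ d α : k) ^ (n' + 1) - ((q ^ d α : k) ^ (n' + 1))⁻¹) *
        ((q ^ d α : k) - (q ^ d α : k)⁻¹)⁻¹ := by
    rw [qInt, inv_pow, div_eq_mul_inv]
  -- closed form of the geometric sum
  have hgeom : ∀ m : ℕ, ((q ^ d α : k) ^ 2 - 1) *
      (∑ j ∈ Finset.range m,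
        ((q ^ d α : k) ^ (2 * j) * ((q ^ d α : k) ^ (n' + 1 + r))⁻¹ -
          ((q ^ d α : k) ^ (2 * j) * ((q ^ d α : k) ^ (n' + 1 + r))⁻¹)⁻¹)) =
      ((q ^ d α : k) ^ m * (q ^ d α : k) ^ m - 1) * ((q ^ d α : k) ^ (n' + 1 + r))⁻¹ -
        (q ^ d α : k) ^ (n' + 1 + r) * (q ^ d α : k) ^ 2 *
          (1 - ((q ^ d α : k) ^ m * (q ^ d α : k) ^ m)⁻¹) := by
    intro m
    induction m with
    | zero => simp
    | succ m ihm =>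
      rw [Finset.sum_range_succ, mul_add, ihm]
      have h1 : ((q ^ d α : k) ^ (2 * m)) ≠ 0 := pow_ne_zero _ ht
      have h2 : ((q ^ d α : k) ^ (n' + 1 + r)) ≠ 0 := pow_ne_zero _ ht
      have h3 : ((q ^ d α : k) ^ m) ≠ 0 := pow_ne_zero _ ht
      field_simp
      ring
  have hcval : c = (q ^ d α : k) ^ (2 * (n' + 1)) * ((q ^ d α : k) ^ (n' + 1 + r))⁻¹ := by
    rw [hcdef]; exact hqw (n' + 1)
  have haval : a = (∑ j ∈ Finset.range (n' + 1),
      ((q ^ d α : k) ^ (2 * j) * ((q ^ d α : k) ^ (n' + 1 + r))⁻¹ -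
        ((q ^ d α : k) ^ (2 * j) * ((q ^ d α : k) ^ (n' + 1 + r))⁻¹)⁻¹)) *
      ((q ^ d α : k) - (q ^ d α : k)⁻¹)⁻¹ := by
    rw [hadef, ← Finset.sum_mul]
    congr 1
    exact Finset.sum_congr rfl fun j _ => by rw [hqw j]
  have hkey3 : ((q ^ d α : k) ^ 2 - 1) *
      (((q ^ d α : k) ^ n' * (1 - ((q ^ d α : k)⁻¹) ^ (2 * (r + 1)))) *
        ((q ^ d α : k) ^ (n' + 1) - ((q ^ d α : k) ^ (n' + 1))⁻¹)) =
      -((((q ^ d α : k)⁻¹ - ((q ^ d α : k)⁻¹) ^ 3) *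
          ((q ^ d α : k) ^ (2 * (n' + 1)) * ((q ^ d α : k) ^ (n' + 1 + r))⁻¹)) *
        (((q ^ d α : k) ^ (n' + 1) * (q ^ d α : k) ^ (n' + 1) - 1) *
            ((q ^ d α : k) ^ (n' + 1 + r))⁻¹ -
          (q ^ d α : k) ^ (n' + 1 + r) * (q ^ d α : k) ^ 2 *
            (1 - ((q ^ d α : k) ^ (n' + 1) * (q ^ d α : k) ^ (n' + 1))⁻¹))) := by
    have habs : ∀ T : k, T ≠ 0 →
        (T ^ 2 - 1) * ((T ^ n' * (1 - (T⁻¹) ^ (2 * (r + 1)))) *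
          (T ^ (n' + 1) - (T ^ (n' + 1))⁻¹)) =
        -(((T⁻¹ - (T⁻¹) ^ 3) * (T ^ (2 * (n' + 1)) * (T ^ (n' + 1 + r))⁻¹)) *
          ((T ^ (n' + 1) * T ^ (n' + 1) - 1) * (T ^ (n' + 1 + r))⁻¹ -
            T ^ (n' + 1 + r) * T ^ 2 * (1 - (T ^ (n' + 1) * T ^ (n' + 1))⁻¹))) := by
      intro T hT0
      have hx' : T ^ (n' + 1) ≠ 0 := pow_ne_zero _ hT0
      have hy' : T ^ (n' + 1 + r) ≠ 0 := pow_ne_zero _ hT0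
      have hr2 : T ^ (2 * (r + 1)) ≠ 0 := pow_ne_zero _ hT0
      have habs2 : ∀ X Y Tv : k, X ≠ 0 → Y ≠ 0 →
          ((X - 1) * (X - Y * Y * Tv ^ 2)) * (Y * X)⁻¹ =
            (X - 1) * Y⁻¹ - Y * Tv ^ 2 * (1 - X⁻¹) := by
        intro X Y Tv hX hY
        field_simp
      have hSL : (T ^ (2 * (r + 1)) - 1) * (T ^ (2 * (r + 1)))⁻¹ =
          1 - T⁻¹ ^ (2 * (r + 1)) := by
        rw [sub_mul, mul_inv_cancel₀ hr2, one_mul, inv_pow]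
      have hxd : (T ^ (n' + 1) * T ^ (n' + 1) - 1) * (T ^ (n' + 1))⁻¹ =
          T ^ (n' + 1) - (T ^ (n' + 1))⁻¹ := by
        rw [sub_mul, mul_inv_cancel_right₀ hx', one_mul]
      have hSR : (T ^ 2 - 1) * (T ^ 3)⁻¹ = T⁻¹ - T⁻¹ ^ 3 := by
        rw [sub_mul, one_mul, inv_pow, show (T ^ 3)⁻¹ = (T ^ 2)⁻¹ * T⁻¹ by
          rw [pow_succ, mul_inv], mul_inv_cancel_left₀ (pow_ne_zero 2 hT0)]
      have hG := habs2 (T ^ (n' + 1) * T ^ (n' + 1)) (T ^ (n' + 1 + r)) T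
        (mul_ne_zero hx' hx') hy'
      rw [← hSL, ← hxd, ← hSR, ← hG]
      field_simp
      ring
    exact habs _ ht
  have hkey2 : (((q ^ d α : k) ^ n' * (1 - ((q ^ d α : k)⁻¹) ^ (2 * (r + 1)))) *
        ((q ^ d α : k) ^ (n' + 1) - ((q ^ d α : k) ^ (n' + 1))⁻¹)) =
      -((((q ^ d α : k)⁻¹ - ((q ^ d α : k)⁻¹) ^ 3) *
          ((q ^ d α : k) ^ (2 * (n' + 1)) * ((q ^ d α : k) ^ (n' + 1 + r))⁻¹)) *
        (∑ j ∈ Finset.range (n' + 1),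
          ((q ^ d α : k) ^ (2 * j) * ((q ^ d α : k) ^ (n' + 1 + r))⁻¹ -
            ((q ^ d α : k) ^ (2 * j) * ((q ^ d α : k) ^ (n' + 1 + r))⁻¹)⁻¹))) := by
    refine mul_left_cancel₀ hT2 ?_
    linear_combination hkey3 + (((q ^ d α : k)⁻¹ - ((q ^ d α : k)⁻¹) ^ 3) *
      ((q ^ d α : k) ^ (2 * (n' + 1)) * ((q ^ d α : k) ^ (n' + 1 + r))⁻¹)) * hgeom (n' + 1)
  have hkey : (((q ^ d α : k) ^ n' * (1 - ((q ^ d α : k)⁻¹) ^ (2 * (r + 1)))) *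
        qInt (q ^ d α : k) (n' + 1)) =
      -((((q ^ d α : k)⁻¹ - ((q ^ d α : k)⁻¹) ^ 3) * c) * a) := by
    rw [hcval, haval, hqIval]
    linear_combination ((q ^ d α : k) - (q ^ d α : k)⁻¹)⁻¹ * hkey2
  have hqIinv : qInt (q ^ d α : k) (n' + 1) * (qInt (q ^ d α : k) (n' + 1))⁻¹ = 1 :=
    mul_inv_cancel₀ hqI
  rw [show qFact (q ^ d α : k) (n' + 1) =
    qFact (q ^ d α : k) n' * qInt (q ^ d α : k) (n' + 1) from rfl, mul_inv]
  linear_combination ((qFact (q ^ d α : k) n')⁻¹ * (qInt (q ^ d α : k) (n' + 1))⁻¹) * hkey -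
    (((q ^ d α : k) ^ n' * (1 - ((q ^ d α : k)⁻¹) ^ (2 * (r + 1)))) *
      (qFact (q ^ d α : k) n')⁻¹) * hqIinv
end
end
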